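/- arXiv:1909.11394 — 3 statements merged into one kernel-verified Lean document; each statement's English description precedes it below -/
import Mathlib

section
/- Let $R$ be a pseudodifferential operator with symbol $b(x,\xi)$ satisfying $|b(x,\xi)|\le C_b(1+|\xi|^2)^{n/2}$ for all $x,\xi\in\mathbb{R}^d$ and some $n\in\mathbb{R}$. Let $f_t$ be the wave packet $f_t(x)=t^{d/2}\chi(t(x-x_0))e^{it^\lambda(x-x_0)\cdot\xi_0}$ with $\widehat\chi$ supported in the unit ball, $|\xi_0|=1$, $\lambda>1$. Then there is a constant $C>0$ (depending on $d$, $n$, $\lambda$, $C_b$, and $\chi$) with $|(f_t\,|\,Rf_t)_{L^2}|\le C\,t^{\lambda n}$ for all $t\ge 2^{1/(\lambda-1)}$. -/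
open MeasureTheory Filter Complex

noncomputable section

abbrev Ed (d : ℕ) := EuclideanSpace ℝ (Fin d)

def FT {d : ℕ} (f : Ed d → ℂ) (ξ : Ed d) : ℂ :=
  ((2 * Real.pi) ^ (-(d : ℝ) / 2) : ℝ) *
    ∫ x : Ed d, Complex.exp (-Complex.I * ((inner ℝ ξ x : ℝ) : ℂ)) * f x

def wavePacket {d : ℕ} (χ : Ed d → ℂ) (x₀ ξ₀ : Ed d) (lam t : ℝ) (x : Ed d) : ℂ :=
  ((t ^ ((d : ℝ) / 2) : ℝ) : ℂ) * χ (t • (x - x₀)) *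
    Complex.exp (Complex.I * ((t ^ lam : ℝ) : ℂ) * ((inner ℝ ξ₀ (x - x₀) : ℝ) : ℂ))

def L2inner {d : ℕ} (f g : Ed d → ℂ) : ℂ := ∫ x : Ed d, (starRingEnd ℂ) (f x) * g x

def sobInner {d : ℕ} (β : ℝ) (f g : Ed d → ℂ) : ℂ :=
  ∫ ξ : Ed d, (((1 + ‖ξ‖ ^ 2) ^ β : ℝ) : ℂ) * ((starRingEnd ℂ) (FT f ξ) * FT g ξ)

def sobNormSq {d : ℕ} (β : ℝ) (f : Ed d → ℂ) : ℝ :=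
  ∫ ξ : Ed d, (1 + ‖ξ‖ ^ 2) ^ β * ‖FT f ξ‖ ^ 2

def psiOp {d : ℕ} (a : Ed d → Ed d → ℂ) (f : Ed d → ℂ) (x : Ed d) : ℂ :=
  ((2 * Real.pi) ^ (-(d : ℝ) / 2) : ℝ) *
    ∫ ξ : Ed d, Complex.exp (Complex.I * ((inner ℝ x ξ : ℝ) : ℂ)) * a x ξ * FT f ξ

def IsClassicalSymbol {d : ℕ} (m : ℝ) (a : Ed d → Ed d → ℂ) : Prop :=
  ContDiff ℝ (⊤ : ℕ∞) (Function.uncurry a) ∧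
  ∀ j k : ℕ, ∃ C > 0, ∀ x ξ : Ed d,
    ‖iteratedFDeriv ℝ j (fun y => iteratedFDeriv ℝ k (a y) ξ) x‖ ≤ C * (1 + ‖ξ‖ ^ 2) ^ ((m - k) / 2)

def IsHomogeneousSymbol {d : ℕ} (m : ℝ) (a : Ed d → Ed d → ℂ) : Prop :=
  ∀ (x ξ : Ed d) (t : ℝ), 1 / 2 ≤ ‖ξ‖ → 1 ≤ t → a x (t • ξ) = ((t ^ m : ℝ) : ℂ) * a x ξ

def IsCenteredComplexGaussian {Ω : Type*} [MeasureSpace Ω] (Z : Ω → ℂ) : Prop :=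
  ∀ a b : ℝ, ∃ v : NNReal,
    Measure.map (fun ω => a * (Z ω).re + b * (Z ω).im) (volume : Measure Ω)
      = ProbabilityTheory.gaussianReal 0 v

end

noncomputable section Aux

/-- auxiliary exponential identity -/
lemma key_exp (a b s r : ℝ) (c χv : ℂ) :
    Complex.exp (-Complex.I * ((a + b : ℝ) : ℂ)) *
        (c * χv * Complex.exp (Complex.I * ((s : ℝ) : ℂ) * ((r : ℝ) : ℂ))) =
      Complex.exp (-Complex.I * ((b : ℝ) : ℂ)) * c *
        (Complex.exp (-Complex.I * ((a - s * r : ℝ) : ℂ)) * χv) := by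
  have h : ∀ z w : ℂ, Complex.exp z * Complex.exp w = Complex.exp (z + w) :=
    fun z w => (Complex.exp_add z w).symm
  calc Complex.exp (-Complex.I * ((a + b : ℝ) : ℂ)) *
        (c * χv * Complex.exp (Complex.I * ((s : ℝ) : ℂ) * ((r : ℝ) : ℂ)))
      = (Complex.exp (-Complex.I * ((a + b : ℝ) : ℂ)) *
          Complex.exp (Complex.I * ((s : ℝ) : ℂ) * ((r : ℝ) : ℂ))) * (c * χv) := by ring
    _ = Complex.exp (-Complex.I * ((a + b : ℝ) : ℂ) + Complex.I * ((s : ℝ) : ℂ) * ((r : ℝ) : ℂ)) *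
          (c * χv) := by rw [h]
    _ = Complex.exp (-Complex.I * ((b : ℝ) : ℂ) + -Complex.I * ((a - s * r : ℝ) : ℂ)) *
          (c * χv) := by
        congr 1; push_cast; ring
    _ = (Complex.exp (-Complex.I * ((b : ℝ) : ℂ)) *
          Complex.exp (-Complex.I * ((a - s * r : ℝ) : ℂ))) * (c * χv) := by rw [h]
    _ = _ := by ring

/-- Fourier transform of the wave packet. -/
lemma ft_wavePacket {d : ℕ} (χ : Ed d → ℂ) (x₀ ξ₀ : Ed d) (lam t : ℝ) (ht : 0 < t) (ξ : Ed d) :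
    FT (wavePacket χ x₀ ξ₀ lam t) ξ =
      Complex.exp (-Complex.I * ((inner ℝ ξ x₀ : ℝ) : ℂ)) * ((t ^ (-(d : ℝ) / 2) : ℝ) : ℂ) *
        FT χ (t⁻¹ • (ξ - (t ^ lam) • ξ₀)) := by
  have ht' : t ≠ 0 := ht.ne'
  set η : Ed d := ξ - (t ^ lam) • ξ₀ with hη
  set H : Ed d → ℂ := fun z => Complex.exp (-Complex.I * ((inner ℝ (t⁻¹ • η) z : ℝ) : ℂ)) * χ z
    with hH
  have step1 : (∫ x : Ed d, Complex.exp (-Complex.I * ((inner ℝ ξ x : ℝ) : ℂ)) *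
        wavePacket χ x₀ ξ₀ lam t x) =
      Complex.exp (-Complex.I * ((inner ℝ ξ x₀ : ℝ) : ℂ)) * ((t ^ ((d : ℝ) / 2) : ℝ) : ℂ) *
        ∫ y : Ed d, H (t • y) := by
    rw [← integral_add_right_eq_self (fun x : Ed d =>
      Complex.exp (-Complex.I * ((inner ℝ ξ x : ℝ) : ℂ)) * wavePacket χ x₀ ξ₀ lam t x) x₀]
    rw [← integral_const_mul]
    congr 1
    ext y
    have h2 : y + x₀ - x₀ = y := add_sub_cancel_right y x₀
    have h1 : (inner ℝ ξ (y + x₀) : ℝ) = (inner ℝ ξ y : ℝ) + (inner ℝ ξ x₀ : ℝ) := inner_add_right ξ y x₀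
    have h3 : (inner ℝ (t⁻¹ • η) (t • y) : ℝ) = (inner ℝ ξ y : ℝ) - t ^ lam * (inner ℝ ξ₀ y : ℝ) := by
      rw [real_inner_smul_left, real_inner_smul_right, hη, inner_sub_left, real_inner_smul_left]
      field_simp
    simp only [wavePacket, hH, h2, h1, h3]
    exact key_exp _ _ _ _ _ _
  have step2 : (∫ y : Ed d, H (t • y)) = (((t ^ (d : ℕ))⁻¹ : ℝ)) • ∫ z : Ed d, H z := by
    rw [MeasureTheory.Measure.integral_comp_smul volume H t, finrank_euclideanSpace_fin,
      _root_.abs_of_nonneg (by positivity : (0:ℝ) ≤ (t ^ (d:ℕ))⁻¹)]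
  unfold FT
  rw [step1, step2]
  have hr' : t ^ ((d : ℝ) / 2) * ((t ^ (d : ℕ))⁻¹) = t ^ (-(d : ℝ) / 2) := by
    rw [← Real.rpow_natCast t d, ← Real.rpow_neg ht.le, ← Real.rpow_add ht]
    congr 1
    ring
  have hr : ((t ^ ((d : ℝ) / 2) : ℝ) : ℂ) * (((t ^ (d : ℕ))⁻¹ : ℝ) : ℂ) =
      ((t ^ (-(d : ℝ) / 2) : ℝ) : ℂ) := by exact_mod_cast congrArg Complex.ofReal hr'
  rw [Complex.real_smul]
  rw [← hr]
  ring

lemma norm_FT_le {d : ℕ} (f : Ed d → ℂ) (ξ : Ed d) :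
    ‖FT f ξ‖ ≤ (2 * Real.pi) ^ (-(d : ℝ) / 2) * ∫ x : Ed d, ‖f x‖ := by
  unfold FT
  rw [norm_mul, Complex.norm_real, Real.norm_eq_abs,
    _root_.abs_of_nonneg (Real.rpow_nonneg (by positivity) _)]
  refine mul_le_mul_of_nonneg_left ?_ (Real.rpow_nonneg (by positivity) _)
  refine le_trans (norm_integral_le_integral_norm _) (le_of_eq ?_)
  congr 1
  ext x
  rw [norm_mul, Complex.norm_exp]
  simp

lemma norm_wavePacket_eq {d : ℕ} (χ : Ed d → ℂ) (x₀ ξ₀ : Ed d) (lam t : ℝ) (ht : 0 < t)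
    (x : Ed d) :
    ‖wavePacket χ x₀ ξ₀ lam t x‖ = t ^ ((d : ℝ) / 2) * ‖χ (t • (x - x₀))‖ := by
  unfold wavePacket
  rw [norm_mul, norm_mul]
  have he : ‖Complex.exp (Complex.I * ((t ^ lam : ℝ) : ℂ) *
      ((inner ℝ ξ₀ (x - x₀) : ℝ) : ℂ))‖ = 1 := by
    rw [Complex.norm_exp]; simp
  rw [he, mul_one, Complex.norm_real, Real.norm_eq_abs,
    _root_.abs_of_nonneg (Real.rpow_nonneg ht.le _)]

lemma integral_norm_wavePacket {d : ℕ} (χ : Ed d → ℂ) (x₀ ξ₀ : Ed d) (lam t : ℝ) (ht : 0 < t) :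
    ∫ x : Ed d, ‖wavePacket χ x₀ ξ₀ lam t x‖ = t ^ (-(d : ℝ) / 2) * ∫ x : Ed d, ‖χ x‖ := by
  rw [funext (norm_wavePacket_eq χ x₀ ξ₀ lam t ht), integral_const_mul]
  have h2 : (∫ x : Ed d, ‖χ (t • (x - x₀))‖) = ∫ y : Ed d, ‖χ (t • y)‖ :=
    integral_sub_right_eq_self (fun y : Ed d => ‖χ (t • y)‖) x₀
  rw [h2, MeasureTheory.Measure.integral_comp_smul volume (fun z : Ed d => ‖χ z‖) t,
    finrank_euclideanSpace_fin, smul_eq_mul, _root_.abs_of_nonneg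
      (by positivity : (0:ℝ) ≤ ((t ^ (d:ℕ))⁻¹ : ℝ)), ← mul_assoc]
  congr 1
  rw [← Real.rpow_natCast t d, ← Real.rpow_neg ht.le, ← Real.rpow_add ht]
  congr 1
  ring

lemma integrable_norm_wavePacket {d : ℕ} (χ : SchwartzMap (Ed d) ℂ) (x₀ ξ₀ : Ed d)
    (lam t : ℝ) (ht : 0 < t) :
    Integrable (fun x : Ed d => ‖wavePacket (⇑χ) x₀ ξ₀ lam t x‖) := by
  have h2 : Integrable (fun y : Ed d => χ (t • y)) := by
    rw [MeasureTheory.integrable_comp_smul_iff volume (⇑χ) ht.ne']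
    exact χ.integrable
  have h3 : Integrable (fun x : Ed d => χ (t • (x - x₀))) := h2.comp_sub_right x₀
  have h4 : Integrable (fun x : Ed d => t ^ ((d : ℝ) / 2) * ‖χ (t • (x - x₀))‖) :=
    h3.norm.const_mul _
  exact (funext (norm_wavePacket_eq (⇑χ) x₀ ξ₀ lam t ht)) ▸ h4

lemma bound_L2inner {d : ℕ} (f g : Ed d → ℂ) (B : ℝ)
    (hg : ∀ x, ‖g x‖ ≤ B) (hf : Integrable (fun x : Ed d => ‖f x‖)) :
    ‖L2inner f g‖ ≤ B * ∫ x : Ed d, ‖f x‖ := by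
  unfold L2inner
  refine le_trans (norm_integral_le_integral_norm _) ?_
  rw [← integral_const_mul]
  refine integral_mono_of_nonneg ?_ (hf.const_mul B) ?_
  · filter_upwards with x using norm_nonneg _
  · filter_upwards with x
    rw [norm_mul, RCLike.norm_conj]
    calc ‖f x‖ * ‖g x‖ ≤ ‖f x‖ * B :=
          mul_le_mul_of_nonneg_left (hg x) (norm_nonneg _)
      _ = B * ‖f x‖ := mul_comm _ _

lemma core_rpow_bound (A B n : ℝ) (hA : 0 < A) (hB0 : 0 < B)
    (h1 : A ^ 2 / 4 ≤ B) (h2 : B ≤ 5 * A ^ 2) :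
    B ^ (n / 2) ≤ (5 : ℝ) ^ (|n| / 2) * (A ^ 2) ^ (n / 2) := by
  have hA2 : (0:ℝ) < A ^ 2 := by positivity
  rcases le_or_gt 0 n with hn | hn
  · calc B ^ (n / 2) ≤ (5 * A ^ 2) ^ (n / 2) :=
          Real.rpow_le_rpow hB0.le h2 (by positivity)
      _ = (5 : ℝ) ^ (n / 2) * (A ^ 2) ^ (n / 2) :=
          Real.mul_rpow (by norm_num) hA2.le
      _ = (5 : ℝ) ^ (|n| / 2) * (A ^ 2) ^ (n / 2) := by rw [_root_.abs_of_nonneg hn]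
  · calc B ^ (n / 2) ≤ (A ^ 2 / 4) ^ (n / 2) :=
          Real.rpow_le_rpow_of_nonpos (by positivity) h1 (by linarith)
      _ = (A ^ 2) ^ (n / 2) / (4 : ℝ) ^ (n / 2) := Real.div_rpow hA2.le (by norm_num) _
      _ = (A ^ 2) ^ (n / 2) * (4 : ℝ) ^ (|n| / 2) := by
          rw [div_eq_mul_inv, ← Real.rpow_neg (by norm_num : (0:ℝ) ≤ 4)]
          congr 2
          rw [abs_of_neg hn]
          ring
      _ ≤ (A ^ 2) ^ (n / 2) * (5 : ℝ) ^ (|n| / 2) := by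
          refine mul_le_mul_of_nonneg_left ?_ (Real.rpow_nonneg hA2.le _)
          exact Real.rpow_le_rpow (by norm_num) (by norm_num) (by positivity)
      _ = _ := mul_comm _ _

lemma symb_t_bound {lam n t : ℝ} (hlam : 1 < lam) (hT : (2:ℝ) ^ (1 / (lam - 1)) ≤ t)
    {E : Type*} [NormedAddCommGroup E] [InnerProductSpace ℝ E]
    (ξ₀ : E) (hξ₀ : ‖ξ₀‖ = 1) (ξ : E) (hξ : ‖ξ - (t ^ lam) • ξ₀‖ ≤ t) :
    (1 + ‖ξ‖ ^ 2) ^ (n / 2) ≤ (5 : ℝ) ^ (|n| / 2) * t ^ (lam * n) := by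
  have hl0 : 0 < lam - 1 := by linarith
  have ht1 : 1 < t :=
    lt_of_lt_of_le ((Real.one_lt_rpow_iff_of_pos two_pos).mpr
      (Or.inl ⟨one_lt_two, one_div_pos.mpr hl0⟩)) hT
  have ht0 : 0 < t := lt_trans one_pos ht1
  have hA : 0 < t ^ lam := Real.rpow_pos_of_pos ht0 _
  have htl : 2 ≤ t ^ (lam - 1) := by
    have := Real.rpow_le_rpow (by positivity) hT hl0.le
    rwa [← Real.rpow_mul (by norm_num : (0:ℝ) ≤ 2), one_div, inv_mul_cancel₀ hl0.ne',
      Real.rpow_one] at this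
  have h2t : 2 * t ≤ t ^ lam := by
    have : t ^ lam = t ^ (lam - 1) * t := by
      rw [Real.rpow_sub ht0, Real.rpow_one]
      field_simp
    rw [this]
    exact mul_le_mul_of_nonneg_right htl ht0.le
  have hlow : t ^ lam / 2 ≤ ‖ξ‖ := by
    have h1 : ‖(t ^ lam) • ξ₀‖ - ‖ξ‖ ≤ ‖(t ^ lam) • ξ₀ - ξ‖ := norm_sub_norm_le _ _
    rw [norm_sub_rev, norm_smul, Real.norm_eq_abs, abs_of_pos hA, hξ₀, mul_one] at h1
    linarith [le_trans h1 hξ]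
  have hhigh : ‖ξ‖ ≤ 2 * t ^ lam := by
    have h1 : ‖ξ‖ ≤ ‖ξ - (t ^ lam) • ξ₀‖ + ‖(t ^ lam) • ξ₀‖ := by
      simpa using norm_add_le (ξ - (t ^ lam) • ξ₀) ((t ^ lam) • ξ₀)
    rw [norm_smul, Real.norm_eq_abs, abs_of_pos hA, hξ₀, mul_one] at h1
    linarith
  have h1A : 1 ≤ t ^ lam := by
    have := Real.rpow_le_rpow_of_exponent_le ht1.le (by linarith : (0:ℝ) ≤ lam)
    rwa [Real.rpow_zero] at this
  have key := core_rpow_bound (t ^ lam) (1 + ‖ξ‖ ^ 2) n hA (by positivity)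
    (by nlinarith [norm_nonneg ξ])
    (by nlinarith [norm_nonneg ξ])
  refine le_trans key (le_of_eq ?_)
  congr 1
  rw [← Real.rpow_natCast (t ^ lam) 2, ← Real.rpow_mul ht0.le, ← Real.rpow_mul ht0.le]
  congr 1
  push_cast
  ring

end Aux

theorem stmt2 {d : ℕ} (χ : SchwartzMap (Ed d) ℂ)
    (hχsupp : ∀ ξ : Ed d, 1 ≤ ‖ξ‖ → FT ⇑χ ξ = 0)
    (x₀ ξ₀ : Ed d) (hξ₀ : ‖ξ₀‖ = 1) (lam : ℝ) (hlam : 1 < lam)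
    (n : ℝ) (bsym : Ed d → Ed d → ℂ) (Cb : ℝ) (hCb : 0 < Cb)
    (hbsym : ∀ x ξ : Ed d, ‖bsym x ξ‖ ≤ Cb * (1 + ‖ξ‖ ^ 2) ^ (n / 2)) :
    ∃ C > (0 : ℝ), ∀ t : ℝ, (2 : ℝ) ^ (1 / (lam - 1)) ≤ t →
      ‖L2inner (wavePacket ⇑χ x₀ ξ₀ lam t) (psiOp bsym (wavePacket ⇑χ x₀ ξ₀ lam t))‖
        ≤ C * t ^ (lam * n) := by
  classical
  set cπ : ℝ := (2 * Real.pi) ^ (-(d : ℝ) / 2) with hcπ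
  have hcπ0 : 0 ≤ cπ := Real.rpow_nonneg (by positivity) _
  set I₀ : ℝ := ∫ x : Ed d, ‖(χ : Ed d → ℂ) x‖ with hI₀def
  have hI₀ : 0 ≤ I₀ := integral_nonneg fun x => norm_nonneg _
  set M : ℝ := cπ * I₀ with hMdef
  have hM : 0 ≤ M := mul_nonneg hcπ0 hI₀
  set Vb : ℝ := (volume (Metric.ball (0 : Ed d) 1)).toReal with hVbdef
  have hVb : 0 ≤ Vb := ENNReal.toReal_nonneg
  set C₀ : ℝ := cπ * Vb * Cb * (5 : ℝ) ^ (|n| / 2) * M * I₀ with hC₀def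
  have hC₀ : 0 ≤ C₀ := by positivity
  refine ⟨C₀ + 1, by positivity, ?_⟩
  intro t hT
  have hl0 : 0 < lam - 1 := by linarith
  have ht1 : 1 < t :=
    lt_of_lt_of_le ((Real.one_lt_rpow_iff_of_pos two_pos).mpr
      (Or.inl ⟨one_lt_two, one_div_pos.mpr hl0⟩)) hT
  have ht0 : 0 < t := lt_trans one_pos ht1
  have htn : 0 ≤ t ^ (lam * n) := (Real.rpow_pos_of_pos ht0 _).le
  have htd2 : 0 ≤ t ^ (-(d : ℝ) / 2) := (Real.rpow_pos_of_pos ht0 _).le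
  set c : Ed d := (t ^ lam) • ξ₀ with hc
  set S : Set (Ed d) := Metric.closedBall c t with hS
  set K : ℝ := Cb * ((5 : ℝ) ^ (|n| / 2) * t ^ (lam * n)) * (t ^ (-(d : ℝ) / 2) * M)
    with hKdef
  have hK : 0 ≤ K := by positivity
  -- the Fourier transform of the wave packet vanishes off S
  have hsupp : ∀ ξ : Ed d, t ≤ ‖ξ - c‖ → FT (wavePacket (⇑χ) x₀ ξ₀ lam t) ξ = 0 := by
    intro ξ hξ
    rw [ft_wavePacket (⇑χ) x₀ ξ₀ lam t ht0 ξ, ← hc]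
    have h1 : (1 : ℝ) ≤ ‖t⁻¹ • (ξ - c)‖ := by
      rw [norm_smul, Real.norm_eq_abs, abs_of_pos (inv_pos.mpr ht0)]
      rw [← mul_le_mul_iff_right₀ ht0, mul_one, ← mul_assoc, mul_inv_cancel₀ ht0.ne', one_mul]
      exact hξ
    rw [hχsupp _ h1, mul_zero]
  -- uniform bound for the Fourier transform of the wave packet
  have hftbd : ∀ ξ : Ed d, ‖FT (wavePacket (⇑χ) x₀ ξ₀ lam t) ξ‖ ≤ t ^ (-(d : ℝ) / 2) * M := by
    intro ξ
    rw [ft_wavePacket (⇑χ) x₀ ξ₀ lam t ht0 ξ]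
    rw [norm_mul, norm_mul]
    have he : ‖Complex.exp (-Complex.I * ((inner ℝ ξ x₀ : ℝ) : ℂ))‖ = 1 := by
      rw [Complex.norm_exp]; simp
    rw [he, one_mul, Complex.norm_real, Real.norm_eq_abs,
      _root_.abs_of_nonneg (Real.rpow_nonneg ht0.le _)]
    exact mul_le_mul_of_nonneg_left (norm_FT_le (⇑χ) _) htd2
  -- pointwise bound for the integrand of psiOp
  have hpt : ∀ x ξ : Ed d,
      ‖Complex.exp (Complex.I * ((inner ℝ x ξ : ℝ) : ℂ)) * bsym x ξ *
        FT (wavePacket (⇑χ) x₀ ξ₀ lam t) ξ‖ ≤ S.indicator (fun _ => K) ξ := by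
    intro x ξ
    have hnorm3 : ‖Complex.exp (Complex.I * ((inner ℝ x ξ : ℝ) : ℂ)) * bsym x ξ *
        FT (wavePacket (⇑χ) x₀ ξ₀ lam t) ξ‖
        = ‖bsym x ξ‖ * ‖FT (wavePacket (⇑χ) x₀ ξ₀ lam t) ξ‖ := by
      rw [norm_mul, norm_mul]
      have he : ‖Complex.exp (Complex.I * ((inner ℝ x ξ : ℝ) : ℂ))‖ = 1 := by
        rw [Complex.norm_exp]; simp
      rw [he, one_mul]
    rw [hnorm3]
    by_cases hmem : ξ ∈ S
    · rw [Set.indicator_of_mem hmem]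
      have hdist : ‖ξ - c‖ ≤ t := by
        have := Metric.mem_closedBall.mp hmem
        rwa [dist_eq_norm] at this
      have h1 : ‖bsym x ξ‖ ≤ Cb * ((5 : ℝ) ^ (|n| / 2) * t ^ (lam * n)) := by
        refine le_trans (hbsym x ξ) ?_
        rw [mul_assoc] at *
        exact mul_le_mul_of_nonneg_left (symb_t_bound hlam hT ξ₀ hξ₀ ξ (hc ▸ hdist)) hCb.le
      calc ‖bsym x ξ‖ * ‖FT (wavePacket (⇑χ) x₀ ξ₀ lam t) ξ‖
          ≤ (Cb * ((5 : ℝ) ^ (|n| / 2) * t ^ (lam * n))) * (t ^ (-(d : ℝ) / 2) * M) :=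
            mul_le_mul h1 (hftbd ξ) (norm_nonneg _) (by positivity)
        _ = K := rfl
    · rw [Set.indicator_of_notMem hmem]
      have hdist : t ≤ ‖ξ - c‖ := by
        have := hmem
        rw [hS, Metric.mem_closedBall, not_le, dist_eq_norm] at this
        exact this.le
      rw [hsupp ξ hdist, norm_zero, mul_zero]
  -- bound for psiOp
  have hSmeas : MeasurableSet S := measurableSet_closedBall
  have hSfin : volume S < ⊤ := measure_closedBall_lt_top
  have hindint : Integrable (S.indicator (fun _ => K)) :=
    ((MeasureTheory.integrableOn_const_iff (C := K)).mpr (Or.inr hSfin)).integrable_indicator hSmeas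
  have hpsibd : ∀ x : Ed d, ‖psiOp bsym (wavePacket (⇑χ) x₀ ξ₀ lam t) x‖ ≤
      cπ * ((volume S).toReal * K) := by
    intro x
    unfold psiOp
    rw [norm_mul, Complex.norm_real, Real.norm_eq_abs,
      _root_.abs_of_nonneg (Real.rpow_nonneg (by positivity) _)]
    rw [← hcπ]
    refine mul_le_mul_of_nonneg_left ?_ hcπ0
    refine le_trans (norm_integral_le_integral_norm _) ?_
    have h2 : (∫ ξ : Ed d, S.indicator (fun _ => K) ξ) = (volume S).toReal * K := by
      rw [MeasureTheory.integral_indicator_const K hSmeas, smul_eq_mul, measureReal_def]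
    rw [← h2]
    refine integral_mono_of_nonneg ?_ hindint ?_
    · filter_upwards with ξ using norm_nonneg _
    · filter_upwards with ξ using hpt x ξ
  -- volume of S
  have hvolS : (volume S).toReal = t ^ (d : ℕ) * Vb := by
    rw [hS, MeasureTheory.Measure.addHaar_closedBall volume c ht0.le,
      finrank_euclideanSpace_fin, ENNReal.toReal_mul,
      ENNReal.toReal_ofReal (by positivity), hVbdef]
  -- put everything together
  have hmain : ‖L2inner (wavePacket (⇑χ) x₀ ξ₀ lam t)
      (psiOp bsym (wavePacket (⇑χ) x₀ ξ₀ lam t))‖ ≤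
      (cπ * ((volume S).toReal * K)) * ∫ x : Ed d, ‖wavePacket (⇑χ) x₀ ξ₀ lam t x‖ :=
    bound_L2inner _ _ _ hpsibd (integrable_norm_wavePacket χ x₀ ξ₀ lam t ht0)
  rw [integral_norm_wavePacket (⇑χ) x₀ ξ₀ lam t ht0, hvolS, ← hI₀def] at hmain
  have hpow : (t ^ (d : ℕ)) * (t ^ (-(d : ℝ) / 2)) * (t ^ (-(d : ℝ) / 2)) = 1 := by
    rw [← Real.rpow_natCast t d, ← Real.rpow_add ht0, ← Real.rpow_add ht0,
      show ((d : ℝ) + -(d : ℝ) / 2 + -(d : ℝ) / 2) = 0 by ring, Real.rpow_zero]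
  have heq : (cπ * (t ^ (d : ℕ) * Vb * K)) * (t ^ (-(d : ℝ) / 2) * I₀)
      = C₀ * t ^ (lam * n) * ((t ^ (d : ℕ)) * (t ^ (-(d : ℝ) / 2)) * (t ^ (-(d : ℝ) / 2))) := by
    rw [hKdef, hC₀def]
    ring
  rw [heq, hpow, mul_one] at hmain
  calc ‖L2inner (wavePacket (⇑χ) x₀ ξ₀ lam t) (psiOp bsym (wavePacket (⇑χ) x₀ ξ₀ lam t))‖
      ≤ C₀ * t ^ (lam * n) := hmain
    _ ≤ (C₀ + 1) * t ^ (lam * n) := by nlinarith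
end

section
/- Let $a(x,\xi)$ be a classical symbol of order $m$ on $\mathbb{R}^d\times\mathbb{R}^d$ that is homogeneous of degree $m$ in $\xi$ for $|\xi|\ge 1/2$, and let $Q$ be the pseudodifferential operator with symbol $a$. Let $f_t$ be the wave packet at $(x_0,\xi_0)$, $|\xi_0|=1$, with parameter $\lambda>1$. Then $\big|(f_t|Qf_t)_{L^2} - (f_t\,|\,a(\cdot,t^\lambda\xi_0)f_t)_{L^2}\big| \le C\, t^{\lambda m}\, t^{1-\lambda}$ for all large $t$, where $C$ depends on $\sup_{x,|\zeta-\xi_0|\le 1}|\nabla_\xi a(x,\zeta)|$ and $\chi$. -/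
open MeasureTheory Filter Complex

set_option maxHeartbeats 1000000

section Aux
open FourierTransform Real

lemma tp_pos : (0:ℝ) < 2 * Real.pi := by positivity

lemma two_pi_ne : (2 * (Real.pi:ℂ)) ≠ 0 := by
  simp [Complex.ofReal_ne_zero, Real.pi_ne_zero]

lemma FT_eq {d : ℕ} (f : Ed d → ℂ) (ξ : Ed d) :
    FT f ξ = ((2 * Real.pi) ^ (-(d : ℝ) / 2) : ℝ) *
      𝓕 f ((2 * Real.pi)⁻¹ • ξ) := by
  rw [Real.fourier_eq]
  unfold FT
  congr 1
  refine integral_congr_ae (Filter.Eventually.of_forall fun x => ?_)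
  simp only [Circle.smul_def, Real.fourierChar_apply, smul_eq_mul]
  congr 1
  rw [real_inner_smul_right, real_inner_comm]
  push_cast
  rw [show (2:ℂ) * ↑Real.pi * -((2 * ↑Real.pi)⁻¹ * ↑(inner ℝ x ξ : ℝ)) * I
      = -I * ↑(inner ℝ x ξ : ℝ) * ((2 * ↑Real.pi) * (2 * ↑Real.pi)⁻¹) by ring]
  rw [mul_inv_cancel₀ two_pi_ne, mul_one]

lemma FT_continuous {d : ℕ} {f : Ed d → ℂ} (hf : Integrable f) : Continuous (FT f) := by
  have h𝓕 : Continuous (𝓕 f) :=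
    VectorFourier.fourierIntegral_continuous Real.continuous_fourierChar
      (by exact continuous_inner) hf
  have : Continuous fun ξ : Ed d => ((2 * Real.pi) ^ (-(d : ℝ) / 2) : ℝ) *
      (𝓕 f ((2 * Real.pi)⁻¹ • ξ) : ℂ) :=
    continuous_const.mul (h𝓕.comp (continuous_const_smul _))
  simpa only [← FT_eq] using this

lemma fourierIntegral_eq_FT {d : ℕ} (f : Ed d → ℂ) (w : Ed d) :
    𝓕 f w = (((2 * Real.pi) ^ ((d : ℝ) / 2) : ℝ) : ℂ) * FT f ((2 * Real.pi) • w) := by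
  rw [FT_eq, smul_smul, inv_mul_cancel₀ tp_pos.ne', one_smul, ← mul_assoc,
    ← Complex.ofReal_mul, ← Real.rpow_add tp_pos]
  ring_nf
  rw [Real.rpow_zero]
  simp

lemma integrable_fourierIntegral_of_FT {d : ℕ} {f : Ed d → ℂ} (hFT : Integrable (FT f)) :
    Integrable (𝓕 f) := by
  have : Integrable fun w : Ed d => FT f ((2 * Real.pi) • w) :=
    hFT.comp_smul tp_pos.ne'
  have := this.const_mul (((2 * Real.pi) ^ ((d : ℝ) / 2) : ℝ) : ℂ)
  refine this.congr (Filter.Eventually.of_forall fun w => ?_)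
  rw [fourierIntegral_eq_FT]

lemma FT_inversion {d : ℕ} {f : Ed d → ℂ} (hf : Integrable f) (hc : Continuous f)
    (hFT : Integrable (FT f)) (x : Ed d) :
    ((2 * Real.pi) ^ (-(d : ℝ) / 2) : ℝ) *
      ∫ ξ : Ed d, Complex.exp (Complex.I * ((inner ℝ x ξ : ℝ) : ℂ)) * FT f ξ = f x := by
  have h𝓕 : Integrable (𝓕 f) := integrable_fourierIntegral_of_FT hFT
  set c : ℂ := (((2 * Real.pi) ^ (-(d : ℝ) / 2) : ℝ) : ℂ) with hc_def
  set G : Ed d → ℂ := fun w => Complex.exp (((2 * Real.pi * (inner ℝ x w : ℝ) : ℝ) : ℂ) * Complex.I) * 𝓕 f w with hG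
  have key : ∀ ξ : Ed d, Complex.exp (Complex.I * ((inner ℝ x ξ : ℝ) : ℂ)) * FT f ξ
      = c * G ((2 * Real.pi)⁻¹ • ξ) := by
    intro ξ
    rw [FT_eq, hG]
    have h2 : (2 * Real.pi) * (inner ℝ x ((2 * Real.pi)⁻¹ • ξ) : ℝ) = (inner ℝ x ξ : ℝ) := by
      rw [real_inner_smul_right]; field_simp
    simp only []
    rw [show ((2 * Real.pi * (inner ℝ x ((2 * Real.pi)⁻¹ • ξ) : ℝ) : ℝ) : ℂ)
        = ((inner ℝ x ξ : ℝ) : ℂ) from congrArg _ h2]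
    rw [mul_comm Complex.I, mul_left_comm]
  rw [integral_congr_ae (Filter.Eventually.of_forall key), MeasureTheory.integral_const_mul]
  have hcv : ∫ ξ : Ed d, G ((2 * Real.pi)⁻¹ • ξ) =
      ((2 * Real.pi) ^ (d : ℕ)) • ∫ w : Ed d, G w := by
    have := MeasureTheory.Measure.integral_comp_inv_smul_of_nonneg (volume : Measure (Ed d)) G
      tp_pos.le
    simpa [finrank_euclideanSpace_fin] using this
  have hinv : ∫ w : Ed d, G w = f x := by
    have h1 : ∫ w : Ed d, G w = 𝓕⁻ (𝓕 f) x := by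
      rw [Real.fourierInv_eq]
      refine integral_congr_ae (Filter.Eventually.of_forall fun w => ?_)
      simp only [hG, Circle.smul_def, Real.fourierChar_apply, smul_eq_mul]
      rw [real_inner_comm w x]
    rw [h1, hf.fourierInv_fourier_eq h𝓕 hc.continuousAt]
  rw [hcv, hinv, Complex.real_smul, ← mul_assoc, ← mul_assoc, hc_def,
    ← Complex.ofReal_mul, ← Complex.ofReal_mul]
  rw [show ((2 * Real.pi) ^ (-(d : ℝ) / 2) : ℝ) * ((2 * Real.pi) ^ (-(d : ℝ) / 2) : ℝ) *
      ((2 * Real.pi) ^ (d : ℕ) : ℝ) = 1 by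
    rw [← Real.rpow_natCast _ d, ← Real.rpow_add tp_pos, ← Real.rpow_add tp_pos]
    ring_nf
    exact Real.rpow_zero _]
  simp

lemma FT_wavePacket {d : ℕ} (g : Ed d → ℂ) (x₀ ξ₀ : Ed d) (lam t : ℝ) (ht : 0 < t)
    (ξ : Ed d) :
    FT (wavePacket g x₀ ξ₀ lam t) ξ
      = Complex.exp (-Complex.I * ((inner ℝ ξ x₀ : ℝ) : ℂ)) * ((t ^ (-(d : ℝ) / 2) : ℝ) : ℂ)
        * FT g (t⁻¹ • (ξ - (t ^ lam : ℝ) • ξ₀)) := by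
  have htne : t ≠ 0 := ht.ne'
  set η : Ed d := t⁻¹ • (ξ - (t ^ lam : ℝ) • ξ₀) with hη
  set c : ℝ := ((2 * Real.pi) ^ (-(d : ℝ) / 2) : ℝ) with hc
  have hcpos : 0 < c := Real.rpow_pos_of_pos (by positivity) _
  set Fn : Ed d → ℂ := fun z =>
    Complex.exp (-Complex.I * ((inner ℝ ξ (x₀ + z) : ℝ) : ℂ)) * wavePacket g x₀ ξ₀ lam t (x₀ + z)
    with hFn
  set K : ℂ := Complex.exp (-Complex.I * ((inner ℝ ξ x₀ : ℝ) : ℂ)) * ((t ^ ((d : ℝ) / 2) : ℝ) : ℂ)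
    with hK
  have h3 : ∀ y : Ed d, Fn (t⁻¹ • y)
      = K * (Complex.exp (-Complex.I * ((inner ℝ η y : ℝ) : ℂ)) * g y) := by
    intro y
    have e1 : (inner ℝ ξ (x₀ + t⁻¹ • y) : ℝ) = (inner ℝ ξ x₀ : ℝ) + t⁻¹ * (inner ℝ ξ y : ℝ) := by
      rw [inner_add_right, real_inner_smul_right]
    have e2 : (inner ℝ ξ₀ (x₀ + t⁻¹ • y - x₀) : ℝ) = t⁻¹ * (inner ℝ ξ₀ y : ℝ) := by
      rw [add_sub_cancel_left, real_inner_smul_right]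
    have e3 : (inner ℝ η y : ℝ) = t⁻¹ * ((inner ℝ ξ y : ℝ) - t ^ lam * (inner ℝ ξ₀ y : ℝ)) := by
      rw [hη, real_inner_smul_left, inner_sub_left, real_inner_smul_left]
    have e4 : t • (x₀ + t⁻¹ • y - x₀) = y := by
      rw [add_sub_cancel_left, smul_smul, mul_inv_cancel₀ htne, one_smul]
    rw [hFn, hK]
    simp only []
    rw [wavePacket, e4, e1, e2, e3]
    rw [show (-Complex.I * (((inner ℝ ξ x₀ : ℝ) + t⁻¹ * (inner ℝ ξ y : ℝ) : ℝ) : ℂ))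
        = (-Complex.I * ((inner ℝ ξ x₀ : ℝ) : ℂ))
          + (-Complex.I * ((t⁻¹ * (inner ℝ ξ y : ℝ) : ℝ) : ℂ)) by push_cast; ring]
    rw [Complex.exp_add]
    have comb : Complex.exp (-Complex.I * ((t⁻¹ * (inner ℝ ξ y : ℝ) : ℝ) : ℂ)) *
        Complex.exp (Complex.I * ((t ^ lam : ℝ) : ℂ) * ((t⁻¹ * (inner ℝ ξ₀ y : ℝ) : ℝ) : ℂ))
        = Complex.exp
          (-Complex.I * ((t⁻¹ * ((inner ℝ ξ y : ℝ) - t ^ lam * (inner ℝ ξ₀ y : ℝ)) : ℝ) : ℂ)) := by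
      rw [← Complex.exp_add]; congr 1; push_cast; ring
    rw [← comb]
    ring
  have h1 : (∫ x : Ed d, Complex.exp (-Complex.I * ((inner ℝ ξ x : ℝ) : ℂ))
        * wavePacket g x₀ ξ₀ lam t x) = ∫ z : Ed d, Fn z := by
    have := (integral_add_left_eq_self (μ := (volume : Measure (Ed d))) (fun x : Ed d =>
      Complex.exp (-Complex.I * ((inner ℝ ξ x : ℝ) : ℂ)) * wavePacket g x₀ ξ₀ lam t x) x₀).symm
    simpa [hFn] using this
  have h2 : (∫ y : Ed d, Fn (t⁻¹ • y)) = ((t ^ (d : ℕ) : ℝ)) • ∫ z : Ed d, Fn z := by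
    have := MeasureTheory.Measure.integral_comp_inv_smul_of_nonneg (volume : Measure (Ed d))
      Fn ht.le
    simpa [finrank_euclideanSpace_fin] using this
  have h4 : (∫ y : Ed d, Fn (t⁻¹ • y)) = K * (∫ y : Ed d,
      Complex.exp (-Complex.I * ((inner ℝ η y : ℝ) : ℂ)) * g y) := by
    rw [integral_congr_ae (Filter.Eventually.of_forall h3), MeasureTheory.integral_const_mul]
  have hS : (∫ y : Ed d, Complex.exp (-Complex.I * ((inner ℝ η y : ℝ) : ℂ)) * g y)
      = ((c : ℂ))⁻¹ * FT g η := by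
    rw [FT, ← hc, ← mul_assoc, inv_mul_cancel₀ (by exact_mod_cast hcpos.ne'), one_mul]
  have hFz : (∫ z : Ed d, Fn z) = ((t ^ (d : ℕ) : ℝ))⁻¹ • (K * (((c : ℂ))⁻¹ * FT g η)) := by
    rw [← hS, ← h4, h2, smul_smul, inv_mul_cancel₀ (by positivity), one_smul]
  rw [FT, ← hc, h1, hFz, hK, Complex.real_smul]
  rw [show ((c:ℂ) * ((((t ^ (d:ℕ) : ℝ)⁻¹ : ℝ) : ℂ) * (Complex.exp (-Complex.I * ((inner ℝ ξ x₀ : ℝ) : ℂ)) * ((t ^ ((d : ℝ) / 2) : ℝ) : ℂ) * ((c:ℂ)⁻¹ * FT g η))))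
      = Complex.exp (-Complex.I * ((inner ℝ ξ x₀ : ℝ) : ℂ))
        * ((((t ^ (d:ℕ) : ℝ)⁻¹ : ℝ) : ℂ) * ((t ^ ((d : ℝ) / 2) : ℝ) : ℂ))
        * FT g η * ((c:ℂ) * (c:ℂ)⁻¹) by ring]
  rw [mul_inv_cancel₀ (by exact_mod_cast hcpos.ne'), mul_one]
  congr 2
  rw [← Complex.ofReal_mul]
  congr 1
  rw [← Real.rpow_natCast t d, ← Real.rpow_neg ht.le, ← Real.rpow_add ht]
  congr 1
  push_cast
  ring

variable {d : ℕ} {m : ℝ} {a : Ed d → Ed d → ℂ}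

lemma symbol_cont_partial (ha : IsClassicalSymbol m a) (x : Ed d) : ContDiff ℝ (⊤ : ℕ∞) (a x) :=
  ha.1.comp (contDiff_const.prodMk contDiff_id)

lemma symbol_diff (ha : IsClassicalSymbol m a) (x : Ed d) : Differentiable ℝ (a x) :=
  (symbol_cont_partial ha x).differentiable (by simp)

lemma symbol_bound0 (ha : IsClassicalSymbol m a) :
    ∃ C > 0, ∀ x ξ : Ed d, ‖a x ξ‖ ≤ C * (1 + ‖ξ‖ ^ 2) ^ (m / 2) := by
  obtain ⟨C, hC, h⟩ := ha.2 0 0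
  refine ⟨C, hC, fun x ξ => ?_⟩
  have := h x ξ
  simpa [norm_iteratedFDeriv_zero] using this

lemma symbol_bound1 (ha : IsClassicalSymbol m a) :
    ∃ C > 0, ∀ x ξ : Ed d, ‖fderiv ℝ (a x) ξ‖ ≤ C * (1 + ‖ξ‖ ^ 2) ^ ((m - 1) / 2) := by
  obtain ⟨C, hC, h⟩ := ha.2 0 1
  refine ⟨C, hC, fun x ξ => ?_⟩
  have h2 := h x ξ
  rw [norm_iteratedFDeriv_zero] at h2
  have h3 : ‖iteratedFDeriv ℝ 1 (a x) ξ‖ = ‖fderiv ℝ (a x) ξ‖ := by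
    rw [← norm_iteratedFDeriv_fderiv, norm_iteratedFDeriv_zero]
  rw [h3] at h2
  simpa using h2

lemma fderiv_homog (ha : IsClassicalSymbol m a) (hhom : IsHomogeneousSymbol m a)
    (x w : Ed d) (s : ℝ) (hs : 1 ≤ s) (hw : 1 / 2 < ‖w‖) :
    ‖fderiv ℝ (a x) (s • w)‖ ≤ s ^ (m - 1) * ‖fderiv ℝ (a x) w‖ := by
  have hspos : (0 : ℝ) < s := by linarith
  have hd := symbol_diff ha x
  have hev : (fun v : Ed d => a x (s • v)) =ᶠ[nhds w]
      (fun v : Ed d => ((s ^ m : ℝ) : ℂ) * a x v) := by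
    have hopen : IsOpen {v : Ed d | 1 / 2 < ‖v‖} := isOpen_lt continuous_const continuous_norm
    filter_upwards [hopen.mem_nhds hw] with v hv using hhom x v s hv.le hs
  have hL : fderiv ℝ (fun v : Ed d => a x (s • v)) w
      = (fderiv ℝ (a x) (s • w)).comp (s • ContinuousLinearMap.id ℝ (Ed d)) := by
    have hsmul : HasFDerivAt (fun v : Ed d => s • v)
        (s • ContinuousLinearMap.id ℝ (Ed d)) w := (hasFDerivAt_id w).const_smul s
    exact (((hd (s • w)).hasFDerivAt).comp w hsmul).fderiv
  have hR : fderiv ℝ (fun v : Ed d => ((s ^ m : ℝ) : ℂ) * a x v) w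
      = ((s ^ m : ℝ) : ℂ) • fderiv ℝ (a x) w := fderiv_const_mul (hd w) _
  have heq : s • fderiv ℝ (a x) (s • w) = ((s ^ m : ℝ) : ℂ) • fderiv ℝ (a x) w := by
    have hcomp : (fderiv ℝ (a x) (s • w)).comp (s • ContinuousLinearMap.id ℝ (Ed d))
        = s • fderiv ℝ (a x) (s • w) := by
      ext v
      simp [ContinuousLinearMap.comp_apply, ContinuousLinearMap.smul_apply, _root_.map_smul]
    rw [← hcomp, ← hL, ← hR]; exact hev.fderiv_eq
  have hiso : fderiv ℝ (a x) (s • w) = s⁻¹ • (((s ^ m : ℝ) : ℂ) • fderiv ℝ (a x) w) := by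
    rw [← heq, smul_smul, inv_mul_cancel₀ hspos.ne', one_smul]
  rw [hiso]
  calc ‖s⁻¹ • (((s ^ m : ℝ) : ℂ) • fderiv ℝ (a x) w)‖
      ≤ ‖s⁻¹‖ * ‖((s ^ m : ℝ) : ℂ) • fderiv ℝ (a x) w‖ :=
        ContinuousLinearMap.opNorm_smul_le _ _
    _ ≤ ‖s⁻¹‖ * (‖((s ^ m : ℝ) : ℂ)‖ * ‖fderiv ℝ (a x) w‖) := by
        refine mul_le_mul_of_nonneg_left (ContinuousLinearMap.opNorm_smul_le _ _) (norm_nonneg _)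
    _ = s ^ (m - 1) * ‖fderiv ℝ (a x) w‖ := by
        rw [Real.norm_eq_abs, Complex.norm_real, Real.norm_eq_abs,
          abs_of_pos (inv_pos.mpr hspos), abs_of_pos (Real.rpow_pos_of_pos hspos m),
          Real.rpow_sub hspos, Real.rpow_one]
        ring

lemma fderiv_bound (ha : IsClassicalSymbol m a) (hhom : IsHomogeneousSymbol m a) :
    ∃ C > 0, ∀ (x ζ : Ed d) (s : ℝ), 1 ≤ s →
      3 / 4 ≤ ‖s⁻¹ • ζ‖ → ‖s⁻¹ • ζ‖ ≤ 5 / 4 → ‖fderiv ℝ (a x) ζ‖ ≤ C * s ^ (m - 1) := by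
  obtain ⟨C₁, hC₁, h1⟩ := symbol_bound1 ha
  refine ⟨C₁ * (1 + (5 : ℝ) ^ ((m - 1) / 2)),
    mul_pos hC₁ (by positivity), fun x ζ s hs hW1 hW2 => ?_⟩
  have hspos : (0 : ℝ) < s := by linarith
  set w : Ed d := s⁻¹ • ζ with hwdef
  have hζ : ζ = s • w := by rw [hwdef, smul_smul, mul_inv_cancel₀ hspos.ne', one_smul]
  have hw : 1 / 2 < ‖w‖ := lt_of_lt_of_le (by norm_num) hW1
  have key := fderiv_homog ha hhom x w s hs hw
  rw [← hζ] at key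
  refine le_trans key ?_
  have hwb : ‖fderiv ℝ (a x) w‖ ≤ C₁ * (1 + (5 : ℝ) ^ ((m - 1) / 2)) := by
    refine le_trans (h1 x w) ?_
    have hbl : (1 : ℝ) ≤ 1 + ‖w‖ ^ 2 := by nlinarith [sq_nonneg ‖w‖]
    have hbu : 1 + ‖w‖ ^ 2 ≤ 5 := by nlinarith [hW2, norm_nonneg w]
    have : (1 + ‖w‖ ^ 2) ^ ((m - 1) / 2) ≤ 1 + (5 : ℝ) ^ ((m - 1) / 2) := by
      rcases le_or_gt 0 ((m - 1) / 2) with he | he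
      · have := Real.rpow_le_rpow (by positivity) hbu he
        have h5 : (0:ℝ) < (5:ℝ) ^ ((m - 1) / 2) := Real.rpow_pos_of_pos (by norm_num) _
        linarith
      · have := Real.rpow_le_one_of_one_le_of_nonpos hbl he.le
        have h5 : (0:ℝ) < (5:ℝ) ^ ((m - 1) / 2) := Real.rpow_pos_of_pos (by norm_num) _
        linarith
    exact mul_le_mul_of_nonneg_left this hC₁.le
  calc s ^ (m - 1) * ‖fderiv ℝ (a x) w‖
      ≤ s ^ (m - 1) * (C₁ * (1 + (5 : ℝ) ^ ((m - 1) / 2))) :=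
        mul_le_mul_of_nonneg_left hwb (Real.rpow_nonneg hspos.le _)
    _ = C₁ * (1 + (5 : ℝ) ^ ((m - 1) / 2)) * s ^ (m - 1) := by ring

lemma symbol_diff_bound (ha : IsClassicalSymbol m a) (hhom : IsHomogeneousSymbol m a) :
    ∃ C > 0, ∀ (x ξ₀ : Ed d), ‖ξ₀‖ = 1 → ∀ (s r : ℝ), 1 ≤ s → 0 ≤ r → r ≤ s / 4 →
      ∀ ξ ∈ Metric.closedBall (s • ξ₀) r,
        ‖a x ξ - a x (s • ξ₀)‖ ≤ C * s ^ (m - 1) * r := by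
  obtain ⟨C, hC, hB⟩ := fderiv_bound ha hhom
  refine ⟨C, hC, fun x ξ₀ hξ₀ s r hs hr hrs ξ hξ => ?_⟩
  have hspos : (0 : ℝ) < s := by linarith
  have hball : ∀ ζ ∈ Metric.closedBall (s • ξ₀) r,
      ‖fderiv ℝ (a x) ζ‖ ≤ C * s ^ (m - 1) := by
    intro ζ hζ
    have hdist : ‖ζ - s • ξ₀‖ ≤ r := by
      rw [← dist_eq_norm]; exact Metric.mem_closedBall.mp hζ
    have hsub : s⁻¹ • ζ - ξ₀ = s⁻¹ • (ζ - s • ξ₀) := by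
      rw [smul_sub, smul_smul, inv_mul_cancel₀ hspos.ne', one_smul]
    have hdist2 : ‖s⁻¹ • ζ - ξ₀‖ ≤ 1 / 4 := by
      rw [hsub, norm_smul, Real.norm_eq_abs, abs_of_pos (inv_pos.mpr hspos)]
      calc s⁻¹ * ‖ζ - s • ξ₀‖ ≤ s⁻¹ * (s / 4) := by
            exact mul_le_mul_of_nonneg_left (le_trans hdist hrs) (inv_pos.mpr hspos).le
        _ = 1 / 4 := by field_simp
    have h34 : 3 / 4 ≤ ‖s⁻¹ • ζ‖ := by
      have h := norm_sub_norm_le ξ₀ (s⁻¹ • ζ)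
      rw [norm_sub_rev, hξ₀] at h
      linarith [hdist2, h]
    have h54 : ‖s⁻¹ • ζ‖ ≤ 5 / 4 := by
      have h := norm_sub_norm_le (s⁻¹ • ζ) ξ₀
      rw [hξ₀] at h
      linarith [hdist2, h]
    exact hB x ζ s hs h34 h54
  have := Convex.norm_image_sub_le_of_norm_fderiv_le
    (fun ζ _ => (symbol_diff ha x) ζ) hball (convex_closedBall _ _)
    (Metric.mem_closedBall_self hr) hξ
  have hd : ‖ξ - s • ξ₀‖ ≤ r := by rw [← dist_eq_norm]; exact Metric.mem_closedBall.mp hξ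
  calc ‖a x ξ - a x (s • ξ₀)‖ ≤ C * s ^ (m - 1) * ‖ξ - s • ξ₀‖ := this
    _ ≤ C * s ^ (m - 1) * r :=
        mul_le_mul_of_nonneg_left hd (mul_nonneg hC.le (Real.rpow_nonneg hspos.le _))

variable {d : ℕ} (g : Ed d → ℂ) (x₀ ξ₀ : Ed d) (lam t : ℝ)

lemma wp_norm (ht : 0 < t) (x : Ed d) :
    ‖wavePacket g x₀ ξ₀ lam t x‖ = (t ^ ((d : ℝ) / 2) : ℝ) * ‖g (t • (x - x₀))‖ := by
  unfold wavePacket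
  rw [norm_mul, norm_mul]
  rw [show Complex.I * ((t ^ lam : ℝ) : ℂ) * ((inner ℝ ξ₀ (x - x₀) : ℝ) : ℂ)
      = ((t ^ lam * (inner ℝ ξ₀ (x - x₀) : ℝ) : ℝ) : ℂ) * Complex.I by push_cast; ring]
  rw [Complex.norm_exp_ofReal_mul_I, mul_one, Complex.norm_real, Real.norm_eq_abs,
    _root_.abs_of_nonneg (Real.rpow_nonneg ht.le _)]

lemma wp_continuous (hg : Continuous g) : Continuous (wavePacket g x₀ ξ₀ lam t) := by
  unfold wavePacket
  refine (continuous_const.mul (hg.comp ((continuous_id.sub continuous_const).const_smul t))).mul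
    (Complex.continuous_exp.comp ?_)
  refine (continuous_const.mul ?_)
  exact Complex.continuous_ofReal.comp
    (continuous_const.inner (continuous_id.sub continuous_const))

lemma wp_integrable (χ : SchwartzMap (Ed d) ℂ) (ht : 0 < t) :
    Integrable (wavePacket (⇑χ) x₀ ξ₀ lam t) := by
  have hcomp : Integrable (fun x : Ed d => (χ : Ed d → ℂ) (t • (x - x₀))) := by
    have h1 : Integrable (fun y : Ed d => (χ : Ed d → ℂ) (t • y)) :=
      χ.integrable.comp_smul ht.ne'
    exact h1.comp_sub_right x₀
  refine Integrable.mono' (hcomp.norm.const_mul ((t ^ ((d : ℝ) / 2) : ℝ)))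
    ((wp_continuous (⇑χ) x₀ ξ₀ lam t χ.continuous).aestronglyMeasurable)
    (Filter.Eventually.of_forall fun x => ?_)
  rw [wp_norm _ _ _ _ _ ht]

lemma wp_norm_integral (χ : SchwartzMap (Ed d) ℂ) (ht : 0 < t) :
    ∫ x : Ed d, ‖wavePacket (⇑χ) x₀ ξ₀ lam t x‖
      = (t ^ (-(d : ℝ) / 2) : ℝ) * ∫ y : Ed d, ‖(χ : Ed d → ℂ) y‖ := by
  have h1 : ∀ x : Ed d, ‖wavePacket (⇑χ) x₀ ξ₀ lam t x‖
      = (t ^ ((d : ℝ) / 2) : ℝ) * ‖(χ : Ed d → ℂ) (t • (x - x₀))‖ :=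
    fun x => wp_norm _ _ _ _ _ ht x
  rw [integral_congr_ae (Filter.Eventually.of_forall h1), MeasureTheory.integral_const_mul]
  have h2 : (∫ x : Ed d, ‖(χ : Ed d → ℂ) (t • (x - x₀))‖)
      = ∫ y : Ed d, ‖(χ : Ed d → ℂ) (t • y)‖ :=
    integral_sub_right_eq_self (fun y : Ed d => ‖(χ : Ed d → ℂ) (t • y)‖) x₀
  have h3 : (∫ y : Ed d, ‖(χ : Ed d → ℂ) (t • y)‖)
      = ((t ^ (d : ℕ) : ℝ))⁻¹ • ∫ y : Ed d, ‖(χ : Ed d → ℂ) y‖ := by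
    have := MeasureTheory.Measure.integral_comp_smul_of_nonneg (volume : Measure (Ed d))
      (fun y : Ed d => ‖(χ : Ed d → ℂ) y‖) t (hR := ht.le)
    simpa [finrank_euclideanSpace_fin] using this
  rw [h2, h3, smul_eq_mul, ← mul_assoc]
  congr 1
  rw [← Real.rpow_natCast t d, ← Real.rpow_neg ht.le, ← Real.rpow_add ht]
  congr 1
  push_cast
  ring

lemma FTf_norm_eq (χ : SchwartzMap (Ed d) ℂ) (ht : 0 < t) (ξ : Ed d) :
    ‖FT (wavePacket (⇑χ) x₀ ξ₀ lam t) ξ‖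
      = (t ^ (-(d : ℝ) / 2) : ℝ) * ‖FT (⇑χ) (t⁻¹ • (ξ - (t ^ lam : ℝ) • ξ₀))‖ := by
  rw [FT_wavePacket _ _ _ _ _ ht, norm_mul, norm_mul]
  rw [show -Complex.I * ((inner ℝ ξ x₀ : ℝ) : ℂ)
      = ((-(inner ℝ ξ x₀ : ℝ) : ℝ) : ℂ) * Complex.I by push_cast; ring]
  rw [Complex.norm_exp_ofReal_mul_I, one_mul, Complex.norm_real, Real.norm_eq_abs,
    _root_.abs_of_nonneg (Real.rpow_nonneg ht.le _)]

lemma FTf_supp (χ : SchwartzMap (Ed d) ℂ)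
    (hχsupp : ∀ ξ : Ed d, 1 ≤ ‖ξ‖ → FT (⇑χ) ξ = 0) (ht : 0 < t) (ξ : Ed d)
    (hξ : FT (wavePacket (⇑χ) x₀ ξ₀ lam t) ξ ≠ 0) :
    ξ ∈ Metric.closedBall ((t ^ lam : ℝ) • ξ₀) t := by
  by_contra h
  apply hξ
  rw [FT_wavePacket _ _ _ _ _ ht, hχsupp _ ?_, mul_zero]
  have hd : t < ‖ξ - (t ^ lam : ℝ) • ξ₀‖ := by
    rw [← dist_eq_norm]
    exact lt_of_not_ge fun hle => h (Metric.mem_closedBall.mpr hle)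
  rw [norm_smul, Real.norm_eq_abs, abs_of_pos (inv_pos.mpr ht)]
  calc (1 : ℝ) = t⁻¹ * t := by field_simp
    _ ≤ t⁻¹ * ‖ξ - (t ^ lam : ℝ) • ξ₀‖ :=
        mul_le_mul_of_nonneg_left hd.le (inv_pos.mpr ht).le

lemma FTf_norm_integral (χ : SchwartzMap (Ed d) ℂ) (ht : 0 < t) :
    ∫ ξ : Ed d, ‖FT (wavePacket (⇑χ) x₀ ξ₀ lam t) ξ‖
      = (t ^ ((d : ℝ) / 2) : ℝ) * ∫ ξ : Ed d, ‖FT (⇑χ) ξ‖ := by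
  rw [integral_congr_ae (Filter.Eventually.of_forall (FTf_norm_eq x₀ ξ₀ lam t χ ht)),
    MeasureTheory.integral_const_mul]
  have h2 : (∫ ξ : Ed d, ‖FT (⇑χ) (t⁻¹ • (ξ - (t ^ lam : ℝ) • ξ₀))‖)
      = ∫ ξ : Ed d, ‖FT (⇑χ) (t⁻¹ • ξ)‖ :=
    integral_sub_right_eq_self (fun ξ : Ed d => ‖FT (⇑χ) (t⁻¹ • ξ)‖) ((t ^ lam : ℝ) • ξ₀)
  have h3 : (∫ ξ : Ed d, ‖FT (⇑χ) (t⁻¹ • ξ)‖)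
      = ((t ^ (d : ℕ) : ℝ)) • ∫ ξ : Ed d, ‖FT (⇑χ) ξ‖ := by
    have := MeasureTheory.Measure.integral_comp_inv_smul_of_nonneg (volume : Measure (Ed d))
      (fun ξ : Ed d => ‖FT (⇑χ) ξ‖) ht.le
    simpa [finrank_euclideanSpace_fin] using this
  rw [h2, h3, smul_eq_mul, ← mul_assoc]
  congr 1
  rw [← Real.rpow_natCast t d, ← Real.rpow_add ht]
  congr 1
  push_cast
  ring

lemma norm_exp_I_mul_real (r : ℝ) : ‖Complex.exp (Complex.I * (r : ℂ))‖ = 1 := by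
  rw [mul_comm, Complex.norm_exp_ofReal_mul_I]

end Aux

theorem stmt3 {d : ℕ} (χ : SchwartzMap (Ed d) ℂ)
    (hχsupp : ∀ ξ : Ed d, 1 ≤ ‖ξ‖ → FT ⇑χ ξ = 0)
    (hχnorm : ∫ x : Ed d, ‖(χ : Ed d → ℂ) x‖ ^ 2 = 1)
    (x₀ ξ₀ : Ed d) (hξ₀ : ‖ξ₀‖ = 1) (lam : ℝ) (hlam : 1 < lam)
    (m : ℝ) (a : Ed d → Ed d → ℂ)
    (ha : IsClassicalSymbol m a) (hhom : IsHomogeneousSymbol m a) :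
    ∃ C > (0 : ℝ), ∃ t₀ : ℝ, 1 ≤ t₀ ∧ ∀ t : ℝ, t₀ ≤ t →
      ‖L2inner (wavePacket ⇑χ x₀ ξ₀ lam t) (psiOp a (wavePacket ⇑χ x₀ ξ₀ lam t))
        - L2inner (wavePacket ⇑χ x₀ ξ₀ lam t)
            (fun x => a x ((t ^ lam : ℝ) • ξ₀) * wavePacket ⇑χ x₀ ξ₀ lam t x)‖
        ≤ C * t ^ (lam * m) * t ^ (1 - lam) := by
  obtain ⟨C₀, hC₀, hb0⟩ := symbol_bound0 ha
  obtain ⟨Cm, hCm, hmvt⟩ := symbol_diff_bound ha hhom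
  set c : ℝ := ((2 * Real.pi) ^ (-(d : ℝ) / 2) : ℝ) with hc
  have hcpos : 0 < c := Real.rpow_pos_of_pos tp_pos _
  set N₁ : ℝ := ∫ y : Ed d, ‖(χ : Ed d → ℂ) y‖ with hN₁def
  set N₂ : ℝ := ∫ ξ : Ed d, ‖FT (⇑χ) ξ‖ with hN₂def
  have hN₁ : 0 ≤ N₁ := integral_nonneg fun _ => norm_nonneg _
  have hN₂ : 0 ≤ N₂ := integral_nonneg fun _ => norm_nonneg _
  refine ⟨c * Cm * N₁ * N₂ + 1, ?_, max 1 ((4 : ℝ) ^ (1 / (lam - 1))), le_max_left _ _,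
    fun t ht => ?_⟩
  · have h0 : 0 ≤ c * Cm * N₁ * N₂ :=
      mul_nonneg (mul_nonneg (mul_nonneg hcpos.le hCm.le) hN₁) hN₂
    linarith
  have ht1 : 1 ≤ t := le_trans (le_max_left _ _) ht
  have htpos : 0 < t := lt_of_lt_of_le one_pos ht1
  have hlam0 : 0 < lam - 1 := by linarith
  have ht4 : (4 : ℝ) ≤ t ^ (lam - 1) := by
    have h1 : ((4 : ℝ) ^ (1 / (lam - 1))) ^ (lam - 1) ≤ t ^ (lam - 1) :=
      Real.rpow_le_rpow (Real.rpow_nonneg (by norm_num) _)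
        (le_trans (le_max_right _ _) ht) hlam0.le
    rwa [← Real.rpow_mul (by norm_num : (0:ℝ) ≤ 4), one_div_mul_cancel hlam0.ne',
      Real.rpow_one] at h1
  have hs1 : 1 ≤ t ^ lam := by
    have := Real.rpow_le_rpow_of_exponent_le ht1 (show (0:ℝ) ≤ lam by linarith)
    rwa [Real.rpow_zero] at this
  have htsplit : t ^ lam = t ^ (lam - 1) * t := by
    rw [show lam = (lam - 1) + 1 by ring, Real.rpow_add htpos, Real.rpow_one]
    rw [show lam - 1 + 1 - 1 = lam - 1 by ring]
  have hts : t ≤ t ^ lam / 4 := by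
    rw [htsplit]; nlinarith [ht4, htpos]
  set s : ℝ := t ^ lam with hsdef
  set η₀ : Ed d := s • ξ₀ with hη₀
  set f : Ed d → ℂ := wavePacket (⇑χ) x₀ ξ₀ lam t with hfdef
  have hf_int : Integrable f := wp_integrable x₀ ξ₀ lam t χ htpos
  have hf_cont : Continuous f := wp_continuous (⇑χ) x₀ ξ₀ lam t χ.continuous
  have hFTf_cont : Continuous (FT f) := FT_continuous hf_int
  have hsupp : ∀ ξ, FT f ξ ≠ 0 → ξ ∈ Metric.closedBall η₀ t := fun ξ hξ =>
    FTf_supp x₀ ξ₀ lam t χ hχsupp htpos ξ hξ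
  have hFTf_hcs : HasCompactSupport (FT f) := by
    refine HasCompactSupport.intro (ProperSpace.isCompact_closedBall η₀ t) fun ξ hξ => ?_
    by_contra h; exact hξ (hsupp ξ h)
  have hFTf_int : Integrable (FT f) := hFTf_cont.integrable_of_hasCompactSupport hFTf_hcs
  have hacont : Continuous (Function.uncurry a) := ha.1.continuous
  have haxcont : ∀ x : Ed d, Continuous (a x) := fun x => (symbol_cont_partial ha x).continuous
  have haξcont : ∀ ξ : Ed d, Continuous (fun x : Ed d => a x ξ) := fun ξ =>
    hacont.comp (continuous_id.prodMk continuous_const)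
  -- integrability of ξ-integrands
  have hecont : ∀ x : Ed d, Continuous (fun ξ : Ed d =>
      Complex.exp (Complex.I * ((inner ℝ x ξ : ℝ) : ℂ))) := fun x =>
    Complex.continuous_exp.comp (continuous_const.mul
      (Complex.continuous_ofReal.comp (continuous_const.inner continuous_id)))
  have hint1 : ∀ x : Ed d, Integrable (fun ξ : Ed d =>
      Complex.exp (Complex.I * ((inner ℝ x ξ : ℝ) : ℂ)) * a x ξ * FT f ξ) := by
    intro x
    refine Continuous.integrable_of_hasCompactSupport
      (((hecont x).mul (haxcont x)).mul hFTf_cont) ?_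
    exact hFTf_hcs.mul_left
  have hint2 : ∀ x : Ed d, Integrable (fun ξ : Ed d =>
      Complex.exp (Complex.I * ((inner ℝ x ξ : ℝ) : ℂ)) * a x η₀ * FT f ξ) := by
    intro x
    refine Continuous.integrable_of_hasCompactSupport
      (((hecont x).mul continuous_const).mul hFTf_cont) ?_
    exact hFTf_hcs.mul_left
  have hint3 : ∀ x : Ed d, Integrable (fun ξ : Ed d =>
      Complex.exp (Complex.I * ((inner ℝ x ξ : ℝ) : ℂ)) * (a x ξ - a x η₀) * FT f ξ) := by
    intro x
    refine ((hint1 x).sub (hint2 x)).congr (Filter.Eventually.of_forall fun ξ => ?_)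
    simp only [Pi.sub_apply]
    ring
  -- pointwise identity
  have hpt : ∀ x : Ed d, psiOp a f x - a x η₀ * f x
      = (c : ℂ) * ∫ ξ : Ed d,
          Complex.exp (Complex.I * ((inner ℝ x ξ : ℝ) : ℂ)) * (a x ξ - a x η₀) * FT f ξ := by
    intro x
    have h1 : psiOp a f x = (c : ℂ) * ∫ ξ : Ed d,
        Complex.exp (Complex.I * ((inner ℝ x ξ : ℝ) : ℂ)) * a x ξ * FT f ξ := rfl
    have h2 : a x η₀ * f x = (c : ℂ) * ∫ ξ : Ed d,
        Complex.exp (Complex.I * ((inner ℝ x ξ : ℝ) : ℂ)) * a x η₀ * FT f ξ := by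
      rw [← FT_inversion hf_int hf_cont hFTf_int x]
      have hcg : ∀ ξ : Ed d, Complex.exp (Complex.I * ((inner ℝ x ξ : ℝ) : ℂ)) * a x η₀ * FT f ξ
          = a x η₀ * (Complex.exp (Complex.I * ((inner ℝ x ξ : ℝ) : ℂ)) * FT f ξ) := fun ξ => by
        ring
      rw [integral_congr_ae (Filter.Eventually.of_forall hcg), MeasureTheory.integral_const_mul]
      ring
    rw [h1, h2, ← mul_sub, ← integral_sub (hint1 x) (hint2 x)]
    congr 1
    refine integral_congr_ae (Filter.Eventually.of_forall fun ξ => ?_)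
    ring
  -- dominating weight
  set W : Ed d → ℝ := fun ξ => C₀ * ((1 + ‖ξ‖ ^ 2) ^ (m / 2) * ‖FT f ξ‖) with hWdef
  have hWcont : Continuous W := by
    refine continuous_const.mul (Continuous.mul ?_ hFTf_cont.norm)
    exact (continuous_const.add ((continuous_norm).pow 2)).rpow_const
      (fun ξ => Or.inl (by positivity : (1:ℝ) + ‖(ξ : Ed d)‖ ^ 2 ≠ 0))
  have hWhcs : HasCompactSupport W := by
    have h1 : HasCompactSupport (fun ξ : Ed d => ‖FT f ξ‖) :=
      hFTf_hcs.comp_left (g := norm) norm_zero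
    exact (h1.mul_left).mul_left
  have hWint : Integrable W := hWcont.integrable_of_hasCompactSupport hWhcs
  have hWbd : ∀ x ξ : Ed d,
      ‖Complex.exp (Complex.I * ((inner ℝ x ξ : ℝ) : ℂ)) * a x ξ * FT f ξ‖ ≤ W ξ := by
    intro x ξ
    rw [norm_mul, norm_mul, norm_exp_I_mul_real, one_mul, hWdef]
    calc ‖a x ξ‖ * ‖FT f ξ‖ ≤ (C₀ * (1 + ‖ξ‖ ^ 2) ^ (m / 2)) * ‖FT f ξ‖ :=
          mul_le_mul_of_nonneg_right (hb0 x ξ) (norm_nonneg _)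
      _ = C₀ * ((1 + ‖ξ‖ ^ 2) ^ (m / 2) * ‖FT f ξ‖) := by ring
  have hψcont : Continuous (psiOp a f) := by
    have : Continuous (fun x : Ed d => ∫ ξ : Ed d,
        Complex.exp (Complex.I * ((inner ℝ x ξ : ℝ) : ℂ)) * a x ξ * FT f ξ) := by
      refine continuous_of_dominated (fun x => (hint1 x).aestronglyMeasurable)
        (fun x => Filter.Eventually.of_forall fun ξ => hWbd x ξ) hWint
        (Filter.Eventually.of_forall fun ξ => ?_)
      refine Continuous.mul (Continuous.mul ?_ (haξcont ξ)) continuous_const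
      exact Complex.continuous_exp.comp (continuous_const.mul
        (Complex.continuous_ofReal.comp ((continuous_id.inner continuous_const))))
    exact continuous_const.mul this
  have hψbd : ∀ x : Ed d, ‖psiOp a f x‖ ≤ c * ∫ ξ : Ed d, W ξ := by
    intro x
    have h1 : psiOp a f x = (c : ℂ) * ∫ ξ : Ed d,
        Complex.exp (Complex.I * ((inner ℝ x ξ : ℝ) : ℂ)) * a x ξ * FT f ξ := rfl
    rw [h1, norm_mul, Complex.norm_real, Real.norm_eq_abs, abs_of_pos hcpos]
    exact mul_le_mul_of_nonneg_left
      (norm_integral_le_of_norm_le hWint (Filter.Eventually.of_forall fun ξ => hWbd x ξ))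
      hcpos.le
  -- integrability of the two inner ℝ products
  obtain ⟨Bχ, hBχ0⟩ := χ.decay 0 0
  have hBχ : ∀ y : Ed d, ‖(χ : Ed d → ℂ) y‖ ≤ Bχ := fun y => by
    simpa [norm_iteratedFDeriv_zero] using hBχ0.2 y
  have hfbd : ∀ x : Ed d, ‖f x‖ ≤ (t ^ ((d : ℝ) / 2) : ℝ) * Bχ := by
    intro x
    rw [hfdef, wp_norm (⇑χ) x₀ ξ₀ lam t htpos x]
    exact mul_le_mul_of_nonneg_left (hBχ _) (Real.rpow_nonneg htpos.le _)
  have hfmeas : Continuous (fun x : Ed d => (starRingEnd ℂ) (f x)) := by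
    simp only [starRingEnd_apply]
    exact continuous_star.comp hf_cont
  have hI1 : Integrable (fun x : Ed d => (starRingEnd ℂ) (f x) * psiOp a f x) := by
    refine Integrable.mono' (hf_int.norm.mul_const (c * ∫ ξ : Ed d, W ξ))
      (hfmeas.mul hψcont).aestronglyMeasurable (Filter.Eventually.of_forall fun x => ?_)
    rw [norm_mul, RCLike.norm_conj]
    exact mul_le_mul_of_nonneg_left (hψbd x) (norm_nonneg _)
  have hI2 : Integrable (fun x : Ed d => (starRingEnd ℂ) (f x) * (a x η₀ * f x)) := by
    refine Integrable.mono'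
      (hf_int.norm.mul_const ((C₀ * (1 + ‖η₀‖ ^ 2) ^ (m / 2)) * ((t ^ ((d : ℝ) / 2) : ℝ) * Bχ)))
      (hfmeas.mul ((haξcont η₀).mul hf_cont)).aestronglyMeasurable
      (Filter.Eventually.of_forall fun x => ?_)
    rw [norm_mul, RCLike.norm_conj, norm_mul]
    have h1 : ‖a x η₀‖ * ‖f x‖ ≤ (C₀ * (1 + ‖η₀‖ ^ 2) ^ (m / 2)) * ((t ^ ((d : ℝ) / 2) : ℝ) * Bχ) := by
      refine mul_le_mul (hb0 x η₀) (hfbd x) (norm_nonneg _) ?_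
      positivity
    exact mul_le_mul_of_nonneg_left h1 (norm_nonneg _)
  have hdiff : L2inner f (psiOp a f) - L2inner f (fun x => a x η₀ * f x)
      = ∫ x : Ed d, (starRingEnd ℂ) (f x) * (psiOp a f x - a x η₀ * f x) := by
    rw [L2inner, L2inner, ← integral_sub hI1 hI2]
    refine integral_congr_ae (Filter.Eventually.of_forall fun x => ?_)
    ring
  set K : ℝ := Cm * s ^ (m - 1) * t with hKdef
  have hK0 : 0 ≤ K :=
    mul_nonneg (mul_nonneg hCm.le (Real.rpow_nonneg (by positivity) _)) htpos.le
  have hab : ∀ (x ξ : Ed d), FT f ξ ≠ 0 → ‖a x ξ - a x η₀‖ ≤ K := fun x ξ h =>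
    hmvt x ξ₀ hξ₀ s t hs1 htpos.le (by linarith [hts]) ξ (hsupp ξ h)
  have hgbd : ∀ x : Ed d, ‖psiOp a f x - a x η₀ * f x‖
      ≤ c * (K * ∫ ξ : Ed d, ‖FT f ξ‖) := by
    intro x
    rw [hpt x, norm_mul, Complex.norm_real, Real.norm_eq_abs, abs_of_pos hcpos]
    refine mul_le_mul_of_nonneg_left ?_ hcpos.le
    have h1 : ‖∫ ξ : Ed d,
        Complex.exp (Complex.I * ((inner ℝ x ξ : ℝ) : ℂ)) * (a x ξ - a x η₀) * FT f ξ‖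
        ≤ ∫ ξ : Ed d, K * ‖FT f ξ‖ := by
      refine norm_integral_le_of_norm_le (hFTf_int.norm.const_mul K)
        (Filter.Eventually.of_forall fun ξ => ?_)
      by_cases hF : FT f ξ = 0
      · simp [hF]
      · rw [norm_mul, norm_mul, norm_exp_I_mul_real, one_mul]
        exact mul_le_mul_of_nonneg_right (hab x ξ hF) (norm_nonneg _)
    rwa [MeasureTheory.integral_const_mul] at h1
  -- final estimate
  rw [hdiff]
  have hN1t : ∫ x : Ed d, ‖f x‖ = (t ^ (-(d : ℝ) / 2) : ℝ) * N₁ :=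
    wp_norm_integral x₀ ξ₀ lam t χ htpos
  have hN2t : ∫ ξ : Ed d, ‖FT f ξ‖ = (t ^ ((d : ℝ) / 2) : ℝ) * N₂ :=
    FTf_norm_integral x₀ ξ₀ lam t χ htpos
  have hmain : ‖∫ x : Ed d, (starRingEnd ℂ) (f x) * (psiOp a f x - a x η₀ * f x)‖
      ≤ (∫ x : Ed d, ‖f x‖) * (c * (K * ∫ ξ : Ed d, ‖FT f ξ‖)) := by
    rw [← MeasureTheory.integral_mul_const]
    refine norm_integral_le_of_norm_le
      (hf_int.norm.mul_const (c * (K * ∫ ξ : Ed d, ‖FT f ξ‖)))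
      (Filter.Eventually.of_forall fun x => ?_)
    rw [norm_mul, RCLike.norm_conj]
    exact mul_le_mul_of_nonneg_left (hgbd x) (norm_nonneg _)
  have hdd : (t ^ (-(d : ℝ) / 2) : ℝ) * (t ^ ((d : ℝ) / 2) : ℝ) = 1 := by
    rw [← Real.rpow_add htpos, show -(d : ℝ) / 2 + (d : ℝ) / 2 = 0 by ring, Real.rpow_zero]
  have hcollapse : (∫ x : Ed d, ‖f x‖) * (c * (K * ∫ ξ : Ed d, ‖FT f ξ‖))
      = c * Cm * N₁ * N₂ * (s ^ (m - 1) * t) := by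
    rw [hN1t, hN2t, hKdef]
    calc (t ^ (-(d : ℝ) / 2) : ℝ) * N₁ * (c * (Cm * s ^ (m - 1) * t * ((t ^ ((d : ℝ) / 2) : ℝ) * N₂)))
        = c * Cm * N₁ * N₂ * (s ^ (m - 1) * t)
          * ((t ^ (-(d : ℝ) / 2) : ℝ) * (t ^ ((d : ℝ) / 2) : ℝ)) := by ring
      _ = c * Cm * N₁ * N₂ * (s ^ (m - 1) * t) := by rw [hdd, mul_one]
  have hpow : s ^ (m - 1) * t = t ^ (lam * m) * t ^ (1 - lam) := by
    rw [hsdef, ← Real.rpow_mul htpos.le]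
    nth_rewrite 2 [← Real.rpow_one t]
    rw [← Real.rpow_add htpos, ← Real.rpow_add htpos]
    congr 1
    ring
  have hpow0 : 0 ≤ s ^ (m - 1) * t :=
    mul_nonneg (Real.rpow_nonneg (by positivity) _) htpos.le
  calc ‖∫ x : Ed d, (starRingEnd ℂ) (f x) * (psiOp a f x - a x η₀ * f x)‖
      ≤ (∫ x : Ed d, ‖f x‖) * (c * (K * ∫ ξ : Ed d, ‖FT f ξ‖)) := hmain
    _ = c * Cm * N₁ * N₂ * (s ^ (m - 1) * t) := hcollapse
    _ ≤ (c * Cm * N₁ * N₂ + 1) * (s ^ (m - 1) * t) :=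
        mul_le_mul_of_nonneg_right (by linarith) hpow0
    _ = (c * Cm * N₁ * N₂ + 1) * t ^ (lam * m) * t ^ (1 - lam) := by
        rw [hpow]; ring
end

section
/- With wave packets $f_t$ at $(x_0,\xi_0)$, $|\xi_0|=1$, parameter $\lambda>1$, and $(t,s)\in[T,2T]^2$ with $T>2^{1/(\lambda-1)}$, one has the non-stationary phase bound $|(f_t|f_s)_{L^2}| \le C\,(1+T^{-1}|t^\lambda - s^\lambda|)^{-1}$, where $C$ depends on $\|\chi\|_{L^1}$ and $\|\nabla\chi\|_{L^1}$. -/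
open MeasureTheory Filter Complex

section AuxProof

variable {d : ℕ}

lemma phase_hasFDerivAt (ξ₀ : Ed d) (μ : ℝ) (u : Ed d) :
    HasFDerivAt (fun u : Ed d => Complex.exp (Complex.I * (μ:ℂ) * ((inner ℝ ξ₀ u : ℝ) : ℂ)))
      ((Complex.exp (Complex.I * (μ:ℂ) * ((inner ℝ ξ₀ u : ℝ) : ℂ)) * (Complex.I * (μ:ℂ))) •
        (Complex.ofRealCLM.comp (innerSL ℝ ξ₀))) u := by
  have h1 : HasFDerivAt (fun u : Ed d => ((inner ℝ ξ₀ u : ℝ) : ℂ))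
      (Complex.ofRealCLM.comp (innerSL ℝ ξ₀)) u :=
    Complex.ofRealCLM.hasFDerivAt.comp u (innerSL ℝ ξ₀).hasFDerivAt
  have h2 := (h1.const_mul (Complex.I * (μ:ℂ))).cexp
  rw [← smul_smul]
  exact h2

lemma scaled_hasFDerivAt (χ : SchwartzMap (Ed d) ℂ) (t : ℝ) (u : Ed d) :
    HasFDerivAt (fun u : Ed d => χ (t • u)) (t • fderiv ℝ (⇑χ) (t • u)) u := by
  have hlin : HasFDerivAt (fun u : Ed d => t • u) (t • (ContinuousLinearMap.id ℝ (Ed d))) u :=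
    (hasFDerivAt_id u).const_smul t
  have h := (χ.differentiableAt.hasFDerivAt).comp u hlin
  exact h.congr_fderiv (by ext v; simp)

lemma conj_scaled_hasFDerivAt (χ : SchwartzMap (Ed d) ℂ) (t : ℝ) (u : Ed d) :
    HasFDerivAt (fun u : Ed d => (starRingEnd ℂ) (χ (t • u)))
      ((Complex.conjCLE.toContinuousLinearMap).comp (t • fderiv ℝ (⇑χ) (t • u))) u := by
  have h := (Complex.conjCLE.toContinuousLinearMap.hasFDerivAt).comp u
    (scaled_hasFDerivAt χ t u)
  exact h

lemma scale_int (F : Ed d → ℝ) {r : ℝ} (hr : 0 < r) :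
    ∫ u : Ed d, F (r • u) = ((r^d : ℝ))⁻¹ * ∫ x : Ed d, F x := by
  rw [MeasureTheory.Measure.integral_comp_smul volume F r, finrank_euclideanSpace_fin,
    _root_.abs_of_nonneg (by positivity), smul_eq_mul]

lemma fderiv_integrable (χ : SchwartzMap (Ed d) ℂ) :
    Integrable (fun x : Ed d => fderiv ℝ (⇑χ) x) := by
  have h2 : ⇑(SchwartzMap.fderivCLM ℝ (Ed d) ℂ χ) = fun x : Ed d => fderiv ℝ (⇑χ) x :=
    funext fun x => SchwartzMap.fderivCLM_apply ℝ χ x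
  rw [← h2]
  exact (SchwartzMap.fderivCLM ℝ (Ed d) ℂ χ).integrable

lemma fderiv_continuous' (χ : SchwartzMap (Ed d) ℂ) :
    Continuous (fun x : Ed d => fderiv ℝ (⇑χ) x) := by
  have h2 : ⇑(SchwartzMap.fderivCLM ℝ (Ed d) ℂ χ) = fun x : Ed d => fderiv ℝ (⇑χ) x :=
    funext fun x => SchwartzMap.fderivCLM_apply ℝ χ x
  rw [← h2]
  exact (SchwartzMap.fderivCLM ℝ (Ed d) ℂ χ).continuous

lemma norm_phase (ξ₀ u : Ed d) (μ : ℝ) :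
    ‖Complex.exp (Complex.I * (μ:ℂ) * ((inner ℝ ξ₀ u : ℝ) : ℂ))‖ = 1 := by
  rw [Complex.norm_exp]
  have : (Complex.I * (μ:ℂ) * ((inner ℝ ξ₀ u : ℝ) : ℂ)).re = 0 := by simp
  rw [this, Real.exp_zero]

lemma osc_key (χ : SchwartzMap (Ed d) ℂ) (ξ₀ : Ed d) (hξ₀ : ‖ξ₀‖ = 1) (μ t s : ℝ)
    (ht : 0 < t) (hs : 0 < s) :
    |μ| * ‖∫ u : Ed d, Complex.exp (Complex.I * (μ:ℂ) * ((inner ℝ ξ₀ u : ℝ) : ℂ)) *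
        ((starRingEnd ℂ) (χ (t • u)) * χ (s • u))‖ ≤
      SchwartzMap.seminorm ℝ 0 0 χ *
        ((t * ((t^d : ℝ))⁻¹ + s * ((s^d : ℝ))⁻¹) * ∫ x : Ed d, ‖fderiv ℝ (⇑χ) x‖) := by
  set B := SchwartzMap.seminorm ℝ 0 0 χ with hBdef
  have hB : ∀ x, ‖χ x‖ ≤ B := fun x => χ.norm_le_seminorm ℝ x
  have hB0 : (0:ℝ) ≤ B := apply_nonneg _ _
  set e : Ed d → ℂ := fun u => Complex.exp (Complex.I * (μ:ℂ) * ((inner ℝ ξ₀ u : ℝ) : ℂ)) with he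
  set g : Ed d → ℂ := fun u => (starRingEnd ℂ) (χ (t • u)) * χ (s • u) with hg
  have he1 : ∀ u, ‖e u‖ = 1 := fun u => norm_phase ξ₀ u μ
  show |μ| * ‖∫ u : Ed d, e u * g u‖ ≤
      B * ((t * ((t^d : ℝ))⁻¹ + s * ((s^d : ℝ))⁻¹) * ∫ x : Ed d, ‖fderiv ℝ (⇑χ) x‖)
  -- derivatives
  have hD : ∀ u : Ed d, HasFDerivAt g
      (((starRingEnd ℂ) (χ (t • u))) • (s • fderiv ℝ (⇑χ) (s • u)) +
        (χ (s • u)) • ((Complex.conjCLE.toContinuousLinearMap).comp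
          (t • fderiv ℝ (⇑χ) (t • u)))) u :=
    fun u => (conj_scaled_hasFDerivAt χ t u).mul (scaled_hasFDerivAt χ s u)
  have hgdiff : Differentiable ℝ g := fun u => (hD u).differentiableAt
  have hediff : Differentiable ℝ e := fun u => (phase_hasFDerivAt ξ₀ μ u).differentiableAt
  have hgnorm : ∀ u, ‖g u‖ ≤ B * ‖χ (s • u)‖ := by
    intro u
    rw [hg]
    simp only [norm_mul, RingHomIsometric.norm_map]
    exact mul_le_mul_of_nonneg_right (hB _) (norm_nonneg _)
  -- evaluation of fderiv g at ξ₀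
  have hDξ : ∀ u : Ed d, fderiv ℝ g u ξ₀ =
      (starRingEnd ℂ) (χ (t • u)) * (s * (fderiv ℝ (⇑χ) (s • u) ξ₀)) +
        χ (s • u) * (starRingEnd ℂ) (t * (fderiv ℝ (⇑χ) (t • u) ξ₀)) := by
    intro u
    rw [(hD u).fderiv]
    simp [smul_smul, Complex.conjCLE_apply, Complex.ofReal_mul]
  have hop : ∀ (r : ℝ) (u : Ed d), ‖fderiv ℝ (⇑χ) (r • u) ξ₀‖ ≤ ‖fderiv ℝ (⇑χ) (r • u)‖ := by
    intro r u
    simpa [hξ₀] using (fderiv ℝ (⇑χ) (r • u)).le_opNorm ξ₀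
  have hDnorm : ∀ u : Ed d, ‖fderiv ℝ g u ξ₀‖ ≤
      B * (t * ‖fderiv ℝ (⇑χ) (t • u)‖ + s * ‖fderiv ℝ (⇑χ) (s • u)‖) := by
    intro u
    rw [hDξ u]
    have h1 : ‖(starRingEnd ℂ) (χ (t • u)) * (↑s * (fderiv ℝ (⇑χ) (s • u) ξ₀))‖
        ≤ B * (s * ‖fderiv ℝ (⇑χ) (s • u)‖) := by
      rw [norm_mul, norm_mul, RingHomIsometric.norm_map]
      have := hop s u
      have h2 : ‖(s:ℂ)‖ = s := by
        rw [Complex.norm_real, Real.norm_eq_abs, _root_.abs_of_nonneg hs.le]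
      rw [h2]
      have := mul_le_mul (hB (t • u)) (mul_le_mul_of_nonneg_left (hop s u) hs.le)
        (by positivity) hB0
      linarith
    have h2 : ‖χ (s • u) * (starRingEnd ℂ) (↑t * (fderiv ℝ (⇑χ) (t • u) ξ₀))‖
        ≤ B * (t * ‖fderiv ℝ (⇑χ) (t • u)‖) := by
      rw [norm_mul, RingHomIsometric.norm_map, norm_mul]
      have h3 : ‖(t:ℂ)‖ = t := by
        rw [Complex.norm_real, Real.norm_eq_abs, _root_.abs_of_nonneg ht.le]
      rw [h3]
      have := mul_le_mul (hB (s • u)) (mul_le_mul_of_nonneg_left (hop t u) ht.le)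
        (by positivity) hB0
      linarith
    calc ‖_ + _‖ ≤ _ + _ := norm_add_le _ _
      _ ≤ B * (s * ‖fderiv ℝ (⇑χ) (s • u)‖) + B * (t * ‖fderiv ℝ (⇑χ) (t • u)‖) :=
          add_le_add h1 h2
      _ = B * (t * ‖fderiv ℝ (⇑χ) (t • u)‖ + s * ‖fderiv ℝ (⇑χ) (s • u)‖) := by ring
  -- integrability
  have hints : Integrable (fun u : Ed d => χ (s • u)) := χ.integrable.comp_smul hs.ne'
  have hdint_t : Integrable (fun u : Ed d => fderiv ℝ (⇑χ) (t • u)) :=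
    (fderiv_integrable χ).comp_smul ht.ne'
  have hdint_s : Integrable (fun u : Ed d => fderiv ℝ (⇑χ) (s • u)) :=
    (fderiv_integrable χ).comp_smul hs.ne'
  have hecont : Continuous e := hediff.continuous
  have hgcont : Continuous g := hgdiff.continuous
  set bnd : Ed d → ℝ :=
    fun u => B * (t * ‖fderiv ℝ (⇑χ) (t • u)‖ + s * ‖fderiv ℝ (⇑χ) (s • u)‖) with hbnd
  have hbnd_int : Integrable bnd :=
    (((hdint_t.norm.const_mul t).add (hdint_s.norm.const_mul s)).const_mul B)
  have heg_int : Integrable (fun u => e u * g u) := by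
    apply Integrable.mono' (hints.norm.const_mul B) ((hecont.mul hgcont).aestronglyMeasurable)
    filter_upwards with u
    rw [Pi.mul_apply, norm_mul, he1 u, one_mul]
    exact hgnorm u
  have hinner1 : (inner ℝ ξ₀ ξ₀ : ℝ) = 1 := by
    rw [real_inner_self_eq_norm_mul_norm, hξ₀]; norm_num
  have hfderive : ∀ u, fderiv ℝ e u ξ₀ = (Complex.I * (μ:ℂ)) * e u := by
    intro u
    rw [(phase_hasFDerivAt ξ₀ μ u).fderiv]
    simp only [ContinuousLinearMap.smul_apply, smul_eq_mul, ContinuousLinearMap.coe_comp',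
      Function.comp_apply, Complex.ofRealCLM_apply, innerSL_apply_apply, hinner1, Complex.ofReal_one,
      mul_one]
    ring
  have hfg'int : Integrable (fun u => e u * fderiv ℝ g u ξ₀) := by
    apply Integrable.mono' hbnd_int
    · apply Continuous.aestronglyMeasurable
      apply hecont.mul
      have hc1 : Continuous (fun u : Ed d => fderiv ℝ (⇑χ) (t • u)) :=
        (fderiv_continuous' χ).comp (continuous_const_smul t)
      have hc2 : Continuous (fun u : Ed d => fderiv ℝ (⇑χ) (s • u)) :=
        (fderiv_continuous' χ).comp (continuous_const_smul s)
      have hfun : (fun u : Ed d => fderiv ℝ g u ξ₀) = fun u =>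
          (starRingEnd ℂ) (χ (t • u)) * ((s:ℂ) * (fderiv ℝ (⇑χ) (s • u) ξ₀)) +
            χ (s • u) * (starRingEnd ℂ) ((t:ℂ) * (fderiv ℝ (⇑χ) (t • u) ξ₀)) := funext hDξ
      rw [hfun]
      apply Continuous.add
      · exact (Complex.continuous_conj.comp (χ.continuous.comp (continuous_const_smul t))).mul
          (continuous_const.mul (hc2.clm_apply continuous_const))
      · exact ((χ.continuous.comp (continuous_const_smul s))).mul
          (Complex.continuous_conj.comp (continuous_const.mul (hc1.clm_apply continuous_const)))
    · filter_upwards with u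
      rw [norm_mul, he1 u, one_mul]
      exact hDnorm u
  have h1int : Integrable (fun u => fderiv ℝ e u ξ₀ * g u) := by
    have hh : (fun u => fderiv ℝ e u ξ₀ * g u)
        = fun u => (Complex.I * (μ:ℂ)) * (e u * g u) := by
      funext u; rw [hfderive u]; ring
    rw [hh]
    exact heg_int.const_mul _
  have hIBP := integral_mul_fderiv_eq_neg_fderiv_mul_of_integrable
      h1int hfg'int heg_int (fun x _ => hediff x) (fun x _ => hgdiff x)
  have hleft : ∫ u, fderiv ℝ e u ξ₀ * g u
      = (Complex.I * (μ:ℂ)) * ∫ u, e u * g u := by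
    rw [← integral_const_mul]
    congr 1
    funext u
    rw [hfderive u]; ring
  have hkey : ∫ u, e u * fderiv ℝ g u ξ₀
      = -((Complex.I * (μ:ℂ)) * ∫ u, e u * g u) := by rw [hIBP, hleft]
  have hnorm : |μ| * ‖∫ u, e u * g u‖ = ‖∫ u, e u * fderiv ℝ g u ξ₀‖ := by
    rw [hkey, norm_neg, norm_mul, norm_mul, Complex.norm_I, one_mul,
      Complex.norm_real, Real.norm_eq_abs]
  rw [hnorm]
  calc ‖∫ u, e u * fderiv ℝ g u ξ₀‖ ≤ ∫ u, bnd u :=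
      norm_integral_le_of_norm_le hbnd_int (Filter.Eventually.of_forall fun u => by
        rw [norm_mul, he1 u, one_mul]; exact hDnorm u)
    _ = B * ((t * ((t^d : ℝ))⁻¹ + s * ((s^d : ℝ))⁻¹) * ∫ x : Ed d, ‖fderiv ℝ (⇑χ) x‖) := by
      rw [hbnd]
      rw [MeasureTheory.integral_const_mul,
        integral_add ((hdint_t.norm).const_mul t) ((hdint_s.norm).const_mul s),
        MeasureTheory.integral_const_mul, MeasureTheory.integral_const_mul,
        scale_int (fun x : Ed d => ‖fderiv ℝ (⇑χ) x‖) ht,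
        scale_int (fun x : Ed d => ‖fderiv ℝ (⇑χ) x‖) hs]
      ring

lemma osc_triv (χ : SchwartzMap (Ed d) ℂ) (ξ₀ : Ed d) (μ t s : ℝ) (ht : 0 < t) (hs : 0 < s) :
    ‖∫ u : Ed d, Complex.exp (Complex.I * (μ:ℂ) * ((inner ℝ ξ₀ u : ℝ) : ℂ)) *
        ((starRingEnd ℂ) (χ (t • u)) * χ (s • u))‖ ≤
      SchwartzMap.seminorm ℝ 0 0 χ * (((t^d : ℝ))⁻¹ * ∫ x : Ed d, ‖χ x‖) := by
  have hB : ∀ x, ‖χ x‖ ≤ SchwartzMap.seminorm ℝ 0 0 χ := fun x => χ.norm_le_seminorm ℝ x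
  have hint_t : Integrable (fun u : Ed d => χ (t • u)) := χ.integrable.comp_smul ht.ne'
  have hbnd_int : Integrable (fun u : Ed d => SchwartzMap.seminorm ℝ 0 0 χ * ‖χ (t • u)‖) :=
    hint_t.norm.const_mul _
  calc ‖∫ u : Ed d, Complex.exp (Complex.I * (μ:ℂ) * ((inner ℝ ξ₀ u : ℝ) : ℂ)) *
        ((starRingEnd ℂ) (χ (t • u)) * χ (s • u))‖
      ≤ ∫ u : Ed d, SchwartzMap.seminorm ℝ 0 0 χ * ‖χ (t • u)‖ := by
        apply norm_integral_le_of_norm_le hbnd_int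
        apply Filter.Eventually.of_forall
        intro u
        rw [norm_mul, norm_phase, one_mul, norm_mul, RingHomIsometric.norm_map]
        calc ‖χ (t • u)‖ * ‖χ (s • u)‖
            ≤ ‖χ (t • u)‖ * SchwartzMap.seminorm ℝ 0 0 χ :=
              mul_le_mul_of_nonneg_left (hB _) (norm_nonneg _)
          _ = SchwartzMap.seminorm ℝ 0 0 χ * ‖χ (t • u)‖ := mul_comm _ _
    _ = SchwartzMap.seminorm ℝ 0 0 χ * (((t^d : ℝ))⁻¹ * ∫ x : Ed d, ‖χ x‖) := by
        rw [MeasureTheory.integral_const_mul, scale_int (fun x : Ed d => ‖χ x‖) ht]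

lemma rpow_arith {d : ℕ} {a b : ℝ} (ha : 0 < a) (hb : 0 < b) (hba : b ≤ 2 * a) :
    a ^ ((d:ℝ)/2) * b ^ ((d:ℝ)/2) * ((a^d : ℝ))⁻¹ ≤ (2:ℝ) ^ ((d:ℝ)/2) := by
  have h1 : b ^ ((d:ℝ)/2) ≤ (2*a) ^ ((d:ℝ)/2) :=
    Real.rpow_le_rpow hb.le hba (by positivity)
  have h2 : (2*a) ^ ((d:ℝ)/2) = (2:ℝ) ^ ((d:ℝ)/2) * a ^ ((d:ℝ)/2) :=
    Real.mul_rpow (by norm_num) ha.le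
  have h3 : a ^ ((d:ℝ)/2) * a ^ ((d:ℝ)/2) = (a^d : ℝ) := by
    rw [← Real.rpow_add ha, ← Real.rpow_natCast a d]
    norm_num
  calc a ^ ((d:ℝ)/2) * b ^ ((d:ℝ)/2) * ((a^d : ℝ))⁻¹
      ≤ a ^ ((d:ℝ)/2) * ((2:ℝ) ^ ((d:ℝ)/2) * a ^ ((d:ℝ)/2)) * ((a^d : ℝ))⁻¹ := by
        apply mul_le_mul_of_nonneg_right _ (by positivity)
        exact mul_le_mul_of_nonneg_left (h1.trans_eq h2) (by positivity)
    _ = (2:ℝ) ^ ((d:ℝ)/2) * ((a^d : ℝ) * ((a^d : ℝ))⁻¹) := by rw [← h3]; ring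
    _ = (2:ℝ) ^ ((d:ℝ)/2) := by
        rw [mul_inv_cancel₀ (by positivity), mul_one]


end AuxProof

set_option maxHeartbeats 1000000 in
theorem stmt11 {d : ℕ} (χ : SchwartzMap (Ed d) ℂ)
    (x₀ ξ₀ : Ed d) (hξ₀ : ‖ξ₀‖ = 1) (lam : ℝ) (hlam : 1 < lam) :
    ∃ C > (0 : ℝ), ∀ T t s : ℝ, (2 : ℝ) ^ (1 / (lam - 1)) < T →
      t ∈ Set.Icc T (2 * T) → s ∈ Set.Icc T (2 * T) →
      ‖L2inner (wavePacket ⇑χ x₀ ξ₀ lam t) (wavePacket ⇑χ x₀ ξ₀ lam s)‖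
        ≤ C * (1 + T⁻¹ * |t ^ lam - s ^ lam|)⁻¹ := by
  set B := SchwartzMap.seminorm ℝ 0 0 χ with hBdef
  set I₁ := ∫ x : Ed d, ‖χ x‖ with hI₁def
  set I₂ := ∫ x : Ed d, ‖fderiv ℝ (⇑χ) x‖ with hI₂def
  have hB0 : (0:ℝ) ≤ B := apply_nonneg _ _
  have hI₁0 : (0:ℝ) ≤ I₁ := integral_nonneg fun x => norm_nonneg _
  have hI₂0 : (0:ℝ) ≤ I₂ := integral_nonneg fun x => norm_nonneg _
  set K := (2:ℝ) ^ ((d:ℝ)/2) with hKdef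
  have hK0 : (0:ℝ) < K := Real.rpow_pos_of_pos (by norm_num) _
  refine ⟨K * B * I₁ + 4 * (K * B * I₂) + 1, by positivity, ?_⟩
  intro T t s hT ht hs
  obtain ⟨ht1, ht2⟩ := ht
  obtain ⟨hs1, hs2⟩ := hs
  have hT0 : (0:ℝ) < T := lt_trans (Real.rpow_pos_of_pos (by norm_num) _) hT
  have ht0 : (0:ℝ) < t := lt_of_lt_of_le hT0 ht1
  have hs0 : (0:ℝ) < s := lt_of_lt_of_le hT0 hs1
  set μ := s ^ lam - t ^ lam with hμdef
  set A := t ^ ((d:ℝ)/2) * s ^ ((d:ℝ)/2) with hAdef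
  have hA0 : (0:ℝ) < A := by positivity
  set J := ∫ u : Ed d, Complex.exp (Complex.I * (μ:ℂ) * ((inner ℝ ξ₀ u : ℝ) : ℂ)) *
      ((starRingEnd ℂ) (χ (t • u)) * χ (s • u)) with hJdef
  have hred : L2inner (wavePacket ⇑χ x₀ ξ₀ lam t) (wavePacket ⇑χ x₀ ξ₀ lam s)
      = ((A : ℝ) : ℂ) * J := by
    have hpt : ∀ x : Ed d,
        (starRingEnd ℂ) (wavePacket ⇑χ x₀ ξ₀ lam t x) * wavePacket ⇑χ x₀ ξ₀ lam s x
        = (fun u : Ed d => ((A : ℝ) : ℂ) *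
            (Complex.exp (Complex.I * (μ:ℂ) * ((inner ℝ ξ₀ u : ℝ) : ℂ)) *
              ((starRingEnd ℂ) (χ (t • u)) * χ (s • u)))) (x - x₀) := by
      intro x
      simp only [wavePacket]
      rw [map_mul, map_mul, Complex.conj_ofReal, ← Complex.exp_conj]
      have hc : (starRingEnd ℂ) (Complex.I * ((t ^ lam : ℝ) : ℂ) * ((inner ℝ ξ₀ (x - x₀) : ℝ) : ℂ))
          = - (Complex.I * ((t ^ lam : ℝ) : ℂ) * ((inner ℝ ξ₀ (x - x₀) : ℝ) : ℂ)) := by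
        rw [map_mul, map_mul, Complex.conj_I, Complex.conj_ofReal, Complex.conj_ofReal]
        ring
      rw [hc]
      have hsplit : Complex.I * (μ:ℂ) * ((inner ℝ ξ₀ (x - x₀) : ℝ) : ℂ)
          = Complex.I * ((s ^ lam : ℝ) : ℂ) * ((inner ℝ ξ₀ (x - x₀) : ℝ) : ℂ) +
            (- (Complex.I * ((t ^ lam : ℝ) : ℂ) * ((inner ℝ ξ₀ (x - x₀) : ℝ) : ℂ))) := by
        rw [hμdef]
        push_cast
        ring
      rw [hsplit, Complex.exp_add, Complex.ofReal_mul]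
      ring
    rw [L2inner]
    calc (∫ x : Ed d, (starRingEnd ℂ) (wavePacket ⇑χ x₀ ξ₀ lam t x) *
          wavePacket ⇑χ x₀ ξ₀ lam s x)
        = ∫ x : Ed d, (fun u : Ed d => ((A : ℝ) : ℂ) *
            (Complex.exp (Complex.I * (μ:ℂ) * ((inner ℝ ξ₀ u : ℝ) : ℂ)) *
              ((starRingEnd ℂ) (χ (t • u)) * χ (s • u)))) (x - x₀) := by
          exact integral_congr_ae (Filter.Eventually.of_forall hpt)
      _ = ∫ u : Ed d, ((A : ℝ) : ℂ) *
            (Complex.exp (Complex.I * (μ:ℂ) * ((inner ℝ ξ₀ u : ℝ) : ℂ)) *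
              ((starRingEnd ℂ) (χ (t • u)) * χ (s • u))) :=
          by rw [integral_sub_right_eq_self (fun u : Ed d => ((A : ℝ) : ℂ) *
            (Complex.exp (Complex.I * (μ:ℂ) * ((inner ℝ ξ₀ u : ℝ) : ℂ)) *
              ((starRingEnd ℂ) (χ (t • u)) * χ (s • u)))) x₀]
      _ = ((A : ℝ) : ℂ) * J := MeasureTheory.integral_const_mul _ _
  have hnorm : ‖L2inner (wavePacket ⇑χ x₀ ξ₀ lam t) (wavePacket ⇑χ x₀ ξ₀ lam s)‖
      = A * ‖J‖ := by
    rw [hred, norm_mul, Complex.norm_real, Real.norm_eq_abs, _root_.abs_of_nonneg hA0.le]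
  -- two bounds
  have hb1 : A * ‖J‖ ≤ K * B * I₁ := by
    calc A * ‖J‖ ≤ A * (B * (((t^d : ℝ))⁻¹ * I₁)) :=
          mul_le_mul_of_nonneg_left (osc_triv χ ξ₀ μ t s ht0 hs0) hA0.le
      _ = (A * ((t^d : ℝ))⁻¹) * (B * I₁) := by ring
      _ ≤ K * (B * I₁) := by
          apply mul_le_mul_of_nonneg_right _ (by positivity)
          exact rpow_arith ht0 hs0 (by linarith)
      _ = K * B * I₁ := by ring
  have hb2 : |μ| * (A * ‖J‖) ≤ 4 * (K * B * I₂) * T := by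
    calc |μ| * (A * ‖J‖) = A * (|μ| * ‖J‖) := by ring
      _ ≤ A * (B * ((t * ((t^d : ℝ))⁻¹ + s * ((s^d : ℝ))⁻¹) * I₂)) :=
          mul_le_mul_of_nonneg_left (osc_key χ ξ₀ hξ₀ μ t s ht0 hs0) hA0.le
      _ = (B * I₂) * ((A * ((t^d : ℝ))⁻¹) * t + (A * ((s^d : ℝ))⁻¹) * s) := by ring
      _ ≤ (B * I₂) * (K * (2*T) + K * (2*T)) := by
          apply mul_le_mul_of_nonneg_left _ (by positivity)
          apply add_le_add
          · exact mul_le_mul (rpow_arith ht0 hs0 (by linarith)) ht2 ht0.le hK0.le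
          · have : A * ((s^d : ℝ))⁻¹ ≤ K := by
              rw [hAdef, mul_comm (t ^ ((d:ℝ)/2))]
              exact rpow_arith hs0 ht0 (by linarith)
            exact mul_le_mul this hs2 hs0.le hK0.le
      _ = 4 * (K * B * I₂) * T := by ring
  -- combine
  have hpos : (0:ℝ) < 1 + T⁻¹ * |t ^ lam - s ^ lam| := by positivity
  rw [← div_eq_mul_inv, le_div_iff₀ hpos, hnorm]
  have habs : |t ^ lam - s ^ lam| = |μ| := by rw [hμdef, abs_sub_comm]
  rw [habs]
  calc A * ‖J‖ * (1 + T⁻¹ * |μ|) = A * ‖J‖ + T⁻¹ * (|μ| * (A * ‖J‖)) := by ring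
    _ ≤ (K * B * I₁) + T⁻¹ * (4 * (K * B * I₂) * T) := by
        apply add_le_add hb1
        exact mul_le_mul_of_nonneg_left hb2 (inv_nonneg.2 hT0.le)
    _ = K * B * I₁ + 4 * (K * B * I₂) := by field_simp
    _ ≤ K * B * I₁ + 4 * (K * B * I₂) + 1 := by linarith
end
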